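/- arXiv:0710.4114 — 9 statements merged into one kernel-verified Lean document; each statement's English description precedes it below -/
import Mathlib

section
/- Assume Ω > 2/√3 and set ω = Ω. Then for p = 1 the quadratic σ² + (Ω²p² − Ω² − 2)σ + 1 = 0 has the double root σ = 1, while for every nonnegative integer p ≠ 1 every complex root of σ² + (Ω²p² − Ω² − 2)σ + 1 = 0 has modulus different from 1. -/
/-!
On the unit circle `z⁻¹ = conj z`, so dividing `z ^ 2 + b z + 1 = 0` by `z` gives
`b = -2 Re z`, whence `|b| ≤ 2`. For `p = 0` the coefficient is `-Ω ^ 2 - 2`, and for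
`p ≥ 2` it is at least `3 Ω ^ 2 - 2`, which exceeds `2` exactly when `Ω ^ 2 > 4 / 3`.
-/

theorem Complex.abs_le_two_of_sq_add_mul_add_one_eq_zero {b : ℝ} {z : ℂ} (hz : ‖z‖ = 1)
    (hroot : z ^ 2 + b * z + 1 = 0) : |b| ≤ 2 := by
  have hz0 : z ≠ 0 := norm_ne_zero_iff.mp (by simp [hz])
  have hconj : (starRingEnd ℂ) z = z⁻¹ :=
    (inv_eq_of_mul_eq_one_right (by rw [Complex.mul_conj, ← Complex.sq_norm, hz]; simp)).symm
  have hb : (b : ℂ) = -(z + (starRingEnd ℂ) z) := by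
    rw [hconj]
    field_simp
    linear_combination hroot
  have hre : b = -(2 * z.re) := by
    simpa [two_mul] using congrArg Complex.re hb
  have hre_le : |z.re| ≤ 1 := hz ▸ Complex.abs_re_le_norm z
  rw [hre, abs_neg, abs_mul, abs_two]
  linarith

theorem four_thirds_lt_sq_of_two_div_sqrt_three_lt {Ω : ℝ} (hΩ : 2 / Real.sqrt 3 < Ω) :
    4 / 3 < Ω ^ 2 := by
  have hsqrt : (0 : ℝ) < Real.sqrt 3 := by positivity
  have h : 2 < Ω * Real.sqrt 3 := (div_lt_iff₀ hsqrt).mp hΩ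
  nlinarith [Real.sq_sqrt (show (0 : ℝ) ≤ 3 by norm_num)]

theorem two_lt_abs_sq_mul_sq_sub_sq_sub_two {Ω : ℝ} (hΩ : 4 / 3 < Ω ^ 2) {p : ℕ} (hp : p ≠ 1) :
    2 < |Ω ^ 2 * (p : ℝ) ^ 2 - Ω ^ 2 - 2| := by
  rcases Nat.lt_or_ge p 2 with hp2 | hp2
  · obtain rfl : p = 0 := by omega
    simp only [CharP.cast_eq_zero]
    rw [abs_of_neg (by nlinarith)]
    nlinarith
  · have hp2' : (2 : ℝ) ≤ p := by exact_mod_cast hp2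
    have hsq : (4 : ℝ) ≤ (p : ℝ) ^ 2 := by nlinarith
    rw [abs_of_pos (by nlinarith)]
    nlinarith

/-- At the lower phonon band edge ω = Ω, under the nonresonance condition Ω > 2/√3,
the dispersion quadratic has the double root 1 for p = 1 and no root on the unit
circle for p ≠ 1. -/
theorem stmt_1 (Ω : ℝ) (hΩ : 2 / Real.sqrt 3 < Ω) :
    (∀ z : ℂ, z ^ 2 + ((Ω ^ 2 * (1 : ℝ) ^ 2 - Ω ^ 2 - 2 : ℝ) : ℂ) * z + 1 = (z - 1) ^ 2) ∧
    (∀ p : ℕ, p ≠ 1 →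
      ∀ z : ℂ, z ^ 2 + ((Ω ^ 2 * (p : ℝ) ^ 2 - Ω ^ 2 - 2 : ℝ) : ℂ) * z + 1 = 0 →
        ‖z‖ ≠ 1) := by
  refine ⟨fun z => by push_cast; ring, fun p hp z hroot hz => ?_⟩
  have hcoeff := two_lt_abs_sq_mul_sq_sub_sq_sub_two
    (four_thirds_lt_sq_of_two_div_sqrt_three_lt hΩ) hp
  have := Complex.abs_le_two_of_sq_add_mul_add_one_eq_zero hz hroot
  linarith
end

section
/- Fix Ω > 0, 0 < ω < Ω, B ∈ ℝ, m₀ ∈ ℝ, and set μ = ω² − Ω² < 0. Then there exists a not-identically-zero sequence (β_n)_{n∈ℤ} of real numbers satisfying β_{n+1} − 2β_n + β_{n−1} = −(ω² m₀ δ_{n,0} + μ) β_n + B β_n³ for all n ∈ ℤ with β_n → 0 as n → ±∞, if and only if the set W^s ∩ A(ω,m₀)·W^u contains a nonzero point, where A(ω,m₀) is the matrix [[1,0],[−ω²m₀,1]]. -/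
/-! Writing `U n = (β n, β (n + 1))`, the defect recurrence says exactly that `U n = G (U (n - 1))`
for `n ≠ 0` and `U 0 = A (G (U (-1)))`. A homoclinic solution therefore gives `U 0 ∈ W^s`, and
`U 0 = A W` where `W = G (U (-1)) ∈ W^u` is reached by the backward orbit `(U k)_{k < 0}`.
Conversely, gluing the forward `G`-orbit of `A W ∈ W^s` to a backward orbit ending at `W ∈ W^u`
gives such a sequence `U`. As `G` and `A` are injective and fix `0`, the solution vanishes
identically as soon as `U 0 = 0`. -/

open Filter Topology Function

section DefectOrbit

variable {X : Type*} {G A : X → X} {O : ℤ → X}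

variable (G A) in
def IsDefectOrbit (O : ℤ → X) : Prop :=
  ∀ n, O n = if n = 0 then A (G (O (n - 1))) else G (O (n - 1))

lemma IsDefectOrbit.apply_of_ne_zero (hO : IsDefectOrbit G A O) {n : ℤ} (hn : n ≠ 0) :
    O n = G (O (n - 1)) := by
  simpa [hn] using hO n

lemma IsDefectOrbit.apply_zero (hO : IsDefectOrbit G A O) : O 0 = A (G (O (-1))) := by
  simpa using hO 0

lemma IsDefectOrbit.iterate_apply_zero (hO : IsDefectOrbit G A O) (k : ℕ) :
    G^[k] (O 0) = O k := by
  induction k with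
  | zero => rfl
  | succ k ih =>
    rw [iterate_succ_apply', ih, hO.apply_of_ne_zero (n := (k + 1 : ℕ)) (by omega)]
    simp

variable [Zero X]

lemma IsDefectOrbit.eq_zero_of_apply_zero (hO : IsDefectOrbit G A O) (hG0 : G 0 = 0)
    (hG : Injective G) (hA0 : A 0 = 0) (hA : Injective A) (h0 : O 0 = 0) (n : ℤ) :
    O n = 0 := by
  induction n using Int.inductionOn' (b := 0) with
  | zero => exact h0
  | succ k hk ih => rw [hO.apply_of_ne_zero (by omega), add_sub_cancel_right, ih, hG0]
  | pred k hk ih =>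
    refine hG ?_
    rw [hG0]
    rcases hk.lt_or_eq with hk | rfl
    · rwa [← hO.apply_of_ne_zero hk.ne]
    · exact hA (by rw [zero_sub, ← hO.apply_zero, ih, hA0])

variable [TopologicalSpace X]

variable (G) in
def stableSet : Set X :=
  {U | Tendsto (fun n : ℕ => G^[n] U) atTop (𝓝 0)}

variable (G) in
def unstableSet : Set X :=
  {U | ∃ V : ℤ → X, V 0 = U ∧ (∀ k : ℤ, k ≤ 0 → V k = G (V (k - 1))) ∧ Tendsto V atBot (𝓝 0)}

lemma IsDefectOrbit.apply_zero_mem_stableSet (hO : IsDefectOrbit G A O)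
    (htop : Tendsto O atTop (𝓝 0)) : O 0 ∈ stableSet G := by
  simp only [stableSet, Set.mem_ofPred_eq, hO.iterate_apply_zero]
  exact htop.comp tendsto_natCast_atTop_atTop

lemma IsDefectOrbit.apply_zero_mem_image_unstableSet (hO : IsDefectOrbit G A O)
    (hbot : Tendsto O atBot (𝓝 0)) : O 0 ∈ A '' unstableSet G := by
  refine ⟨G (O (-1)), ⟨update O 0 (G (O (-1))), update_self .., fun k hk => ?_, ?_⟩,
    hO.apply_zero.symm⟩
  · rcases hk.lt_or_eq with hk | rfl
    · rw [update_of_ne hk.ne, update_of_ne (by omega), hO.apply_of_ne_zero hk.ne]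
    · rw [update_self, update_of_ne (by omega), zero_sub]
  · refine hbot.congr' ?_
    filter_upwards [eventually_lt_atBot 0] with k hk
    rw [update_of_ne hk.ne]

lemma exists_isDefectOrbit_of_mem_unstableSet {W : X} (hW : W ∈ unstableSet G)
    (hAW : A W ∈ stableSet G) :
    ∃ O : ℤ → X, O 0 = A W ∧ IsDefectOrbit G A O ∧ Tendsto O atTop (𝓝 0) ∧
      Tendsto O atBot (𝓝 0) := by
  obtain ⟨V, hV0, hV, hVbot⟩ := hW
  refine ⟨fun n => if 0 ≤ n then G^[n.toNat] (A W) else V n, by simp, fun n => ?_, ?_, ?_⟩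
  · dsimp only
    rcases lt_trichotomy n 0 with hn | rfl | hn
    · rw [if_neg hn.ne, if_neg hn.not_ge, if_neg (by omega), hV n hn.le]
    · rw [if_pos rfl, if_pos le_rfl, if_neg (by omega), ← hV 0 le_rfl, hV0]
      rfl
    · rw [if_neg hn.ne', if_pos hn.le, if_pos (by omega), ← iterate_succ_apply' G]
      congr 2
      omega
  · rw [← Nat.map_cast_int_atTop, tendsto_map'_iff]
    simp only [comp_def, Nat.cast_nonneg, if_true, Int.toNat_natCast]
    exact hAW
  · refine hVbot.congr' ?_
    filter_upwards [eventually_lt_atBot 0] with k hk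
    simp [not_le.mpr hk]

theorem exists_homoclinic_isDefectOrbit_iff (hG0 : G 0 = 0) (hG : Injective G) (hA0 : A 0 = 0)
    (hA : Injective A) :
    (∃ O : ℤ → X, (∃ n, O n ≠ 0) ∧ IsDefectOrbit G A O ∧ Tendsto O atTop (𝓝 0) ∧
        Tendsto O atBot (𝓝 0)) ↔
      ∃ U, U ≠ 0 ∧ U ∈ stableSet G ∩ A '' unstableSet G := by
  constructor
  · rintro ⟨O, ⟨n, hn⟩, hO, htop, hbot⟩
    exact ⟨O 0, fun h0 => hn (hO.eq_zero_of_apply_zero hG0 hG hA0 hA h0 n),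
      hO.apply_zero_mem_stableSet htop, hO.apply_zero_mem_image_unstableSet hbot⟩
  · rintro ⟨_, hU, hUs, W, hW, rfl⟩
    obtain ⟨O, hO0, hO⟩ := exists_isDefectOrbit_of_mem_unstableSet hW hUs
    exact ⟨O, ⟨0, hO0 ▸ hU⟩, hO⟩

end DefectOrbit

section SecondOrderRecurrence

variable {R : Type*}

def recurrenceMap (F : R → R → R) (U : R × R) : R × R := (U.2, F U.1 U.2)

def shear [Ring R] (c : R) (U : R × R) : R × R := (U.1, c * U.1 + U.2)

lemma recurrenceMap_injective {F : R → R → R} (hF : ∀ b, Injective (F · b)) :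
    Injective (recurrenceMap F) := by
  rintro ⟨a, b⟩ ⟨a', b'⟩ h
  simp only [recurrenceMap, Prod.mk.injEq] at h
  obtain ⟨rfl, h⟩ := h
  rw [hF b h]

lemma shear_injective [Ring R] (c : R) : Injective (shear c) := by
  rintro ⟨a, b⟩ ⟨a', b'⟩ h
  simp only [shear, Prod.mk.injEq] at h
  obtain ⟨rfl, h⟩ := h
  rw [add_left_cancel h]

lemma shear_apply_zero [Ring R] (c : R) : shear c 0 = 0 := by
  simp [shear]

lemma tendsto_consecutive_iff {α : Type*} [TopologicalSpace α] {l : Filter ℤ}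
    (hl : Tendsto (· + 1) l l) {β : ℤ → α} {a : α} :
    Tendsto (fun n => (β n, β (n + 1))) l (𝓝 (a, a)) ↔ Tendsto β l (𝓝 a) := by
  rw [Prod.tendsto_iff]
  exact ⟨And.left, fun h => ⟨h, h.comp hl⟩⟩

variable [Ring R] {F : R → R → R} {c : R}

lemma recurrenceMap_apply_zero (hF : F 0 0 = 0) : recurrenceMap F 0 = 0 := by
  simp [recurrenceMap, hF]

lemma isDefectOrbit_consecutive_iff {β : ℤ → R} :
    IsDefectOrbit (recurrenceMap F) (shear c) (fun n => (β n, β (n + 1))) ↔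
      ∀ n, β (n + 1) = (if n = 0 then c else 0) * β n + F (β (n - 1)) (β n) := by
  refine forall_congr' fun n => ?_
  split_ifs <;> simp [recurrenceMap, shear]

lemma IsDefectOrbit.eq_consecutive {O : ℤ → R × R}
    (hO : IsDefectOrbit (recurrenceMap F) (shear c) O) :
    O = fun n => ((O n).1, (O (n + 1)).1) := by
  funext n
  rw [hO (n + 1)]
  split_ifs <;> simp [recurrenceMap, shear]

theorem exists_homoclinic_recurrence_iff [TopologicalSpace R] :
    (∃ β : ℤ → R, (∃ n, β n ≠ 0) ∧
        (∀ n, β (n + 1) = (if n = 0 then c else 0) * β n + F (β (n - 1)) (β n)) ∧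
        Tendsto β atTop (𝓝 0) ∧ Tendsto β atBot (𝓝 0)) ↔
      ∃ O : ℤ → R × R, (∃ n, O n ≠ 0) ∧ IsDefectOrbit (recurrenceMap F) (shear c) O ∧
        Tendsto O atTop (𝓝 0) ∧ Tendsto O atBot (𝓝 0) := by
  have htop := tendsto_atTop_add_const_right atTop (1 : ℤ) tendsto_id
  have hbot := tendsto_atBot_add_const_right atBot (1 : ℤ) tendsto_id
  constructor
  · rintro ⟨β, ⟨n, hn⟩, hβ, hβtop, hβbot⟩
    exact ⟨fun n => (β n, β (n + 1)), ⟨n, fun h => hn (congrArg Prod.fst h)⟩,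
      isDefectOrbit_consecutive_iff.mpr hβ, (tendsto_consecutive_iff htop).mpr hβtop,
      (tendsto_consecutive_iff hbot).mpr hβbot⟩
  · rintro ⟨O, ⟨n, hn⟩, hO, hOtop, hObot⟩
    rw [hO.eq_consecutive] at hn hOtop hObot
    rw [hO.eq_consecutive] at hO
    refine ⟨fun n => (O n).1, ?_, isDefectOrbit_consecutive_iff.mp hO,
      (tendsto_consecutive_iff htop).mp hOtop, (tendsto_consecutive_iff hbot).mp hObot⟩
    by_contra! h
    simp [h] at hn

end SecondOrderRecurrence

theorem stmt_4_general (Ω ω B m₀ : ℝ) :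
    let μ : ℝ := ω ^ 2 - Ω ^ 2
    let G : ℝ × ℝ → ℝ × ℝ := fun U => (U.2, -U.1 + (2 - μ) * U.2 + B * U.2 ^ 3)
    let Ws : Set (ℝ × ℝ) :=
      {U | Filter.Tendsto (fun n : ℕ => G^[n] U) Filter.atTop (nhds 0)}
    let Wu : Set (ℝ × ℝ) :=
      {U | ∃ V : ℤ → ℝ × ℝ, V 0 = U ∧ (∀ k : ℤ, k ≤ 0 → V k = G (V (k - 1))) ∧
        Filter.Tendsto V Filter.atBot (nhds 0)}
    let A : ℝ × ℝ → ℝ × ℝ := fun U => (U.1, -(ω ^ 2 * m₀) * U.1 + U.2)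
    ((∃ β : ℤ → ℝ, (∃ n, β n ≠ 0) ∧
        (∀ n : ℤ, β (n + 1) - 2 * β n + β (n - 1) =
          -(ω ^ 2 * m₀ * (if n = 0 then 1 else 0) + μ) * β n + B * β n ^ 3) ∧
        Filter.Tendsto β Filter.atTop (nhds 0) ∧
        Filter.Tendsto β Filter.atBot (nhds 0)) ↔
      ∃ U : ℝ × ℝ, U ≠ 0 ∧ U ∈ Ws ∩ A '' Wu) := by
  intro μ G Ws Wu A
  let F : ℝ → ℝ → ℝ := fun a b => -a + (2 - μ) * b + B * b ^ 3
  have hF : ∀ b, Injective (F · b) := fun b a a' h => by simpa [F] using h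
  have hrec : ∀ (β : ℤ → ℝ) (n : ℤ), β (n + 1) - 2 * β n + β (n - 1) =
        -(ω ^ 2 * m₀ * (if n = 0 then 1 else 0) + μ) * β n + B * β n ^ 3 ↔
      β (n + 1) = (if n = 0 then -(ω ^ 2 * m₀) else 0) * β n + F (β (n - 1)) (β n) := by
    intro β n
    split_ifs <;> constructor <;> intro h <;> linarith
  simp_rw [hrec]
  exact exists_homoclinic_recurrence_iff.trans <| exists_homoclinic_isDefectOrbit_iff
    (recurrenceMap_apply_zero (by simp [F])) (recurrenceMap_injective hF)
    (shear_apply_zero _) (shear_injective _)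

/-- The defect recurrence β_{n+1} − 2β_n + β_{n−1} = −(ω²m₀δ_{n0} + μ)β_n + Bβ_n³
has a nontrivial homoclinic orbit to 0 iff the stable manifold W^s of the
homogeneous map G meets the image of its unstable manifold W^u under the linear
shear A(ω,m₀) = [[1,0],[−ω²m₀,1]] at a nonzero point. -/
theorem stmt_4 (Ω ω B m₀ : ℝ) (hΩ : 0 < Ω) (hω : 0 < ω) (hωΩ : ω < Ω) :
    let μ : ℝ := ω ^ 2 - Ω ^ 2
    let G : ℝ × ℝ → ℝ × ℝ := fun U => (U.2, -U.1 + (2 - μ) * U.2 + B * U.2 ^ 3)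
    let Ws : Set (ℝ × ℝ) :=
      {U | Filter.Tendsto (fun n : ℕ => G^[n] U) Filter.atTop (nhds 0)}
    let Wu : Set (ℝ × ℝ) :=
      {U | ∃ V : ℤ → ℝ × ℝ, V 0 = U ∧ (∀ k : ℤ, k ≤ 0 → V k = G (V (k - 1))) ∧
        Filter.Tendsto V Filter.atBot (nhds 0)}
    let A : ℝ × ℝ → ℝ × ℝ := fun U => (U.1, -(ω ^ 2 * m₀) * U.1 + U.2)
    ((∃ β : ℤ → ℝ, (∃ n, β n ≠ 0) ∧
        (∀ n : ℤ, β (n + 1) - 2 * β n + β (n - 1) =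
          -(ω ^ 2 * m₀ * (if n = 0 then 1 else 0) + μ) * β n + B * β n ^ 3) ∧
        Filter.Tendsto β Filter.atTop (nhds 0) ∧
        Filter.Tendsto β Filter.atBot (nhds 0)) ↔
      ∃ U : ℝ × ℝ, U ≠ 0 ∧ U ∈ Ws ∩ A '' Wu) :=
  stmt_4_general Ω ω B m₀
end

section
/- Fix Ω > 0 and 0 < ω < Ω, set μ = ω² − Ω², σ = 1 − μ/2 − (1/2)√(μ² − 4μ) (so that 0 < σ < 1 and σ + σ^{−1} = 2 − μ), and m_l(ω) = (σ^{−1} − σ)/ω². Consider the linear recurrence β_{n+1} − 2β_n + β_{n−1} = −(ω² m₀ δ_{n,0} + μ) β_n, n ∈ ℤ. If m₀ = m_l(ω), then a real sequence (β_n)_{n∈ℤ} solves this recurrence with β_n → 0 as n → ±∞ if and only if there exists c ∈ ℝ with β_n = c σ^{|n|} for all n. If m₀ ≠ m_l(ω), then the only solution with β_n → 0 as n → ±∞ is the zero sequence. -/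
/-!
Away from the defect the recurrence reads `β (n + 1) + β (n - 1) = (σ + σ⁻¹) β n`, whose
characteristic roots are `σ` and `σ⁻¹`. On each half-line the combination
`β (n + 1) - σ β n` is multiplied by `σ⁻¹` at each step, so it can only tend to `0` if it
vanishes; hence a decaying solution is `β 0 σ^|n|`. The equation at the defect site then reads
`2σ β 0 = (σ + σ⁻¹ - ω² m₀) β 0`, which forces `β 0 = 0` unless `ω² m₀ = σ⁻¹ - σ`.
-/

open Filter Topology

lemma stable_root_spec {μ σ : ℝ} (hμ : μ < 0) (hσ : σ = 1 - μ / 2 - √(μ ^ 2 - 4 * μ) / 2) :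
    0 < σ ∧ σ < 1 ∧ σ + σ⁻¹ = 2 - μ := by
  have hsq : √(μ ^ 2 - 4 * μ) ^ 2 = μ ^ 2 - 4 * μ := Real.sq_sqrt (by nlinarith)
  have hsqrt : 0 ≤ √(μ ^ 2 - 4 * μ) := Real.sqrt_nonneg _
  have hσ0 : 0 < σ := by rw [hσ]; nlinarith
  refine ⟨hσ0, by rw [hσ]; nlinarith, ?_⟩
  field_simp
  rw [hσ]
  nlinarith

lemma eq_zero_of_tendsto_zero_of_succ_eq_mul {γ : ℕ → ℝ} {τ : ℝ} (hτ : 1 ≤ |τ|)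
    (hγ : ∀ n, γ (n + 1) = τ * γ n) (ht : Tendsto γ atTop (𝓝 0)) (n : ℕ) : γ n = 0 := by
  have hmono : Monotone fun n => |γ n| := monotone_nat_of_le_succ fun n => by
    rw [hγ, abs_mul]
    exact le_mul_of_one_le_left (abs_nonneg _) hτ
  have hle : |γ n| ≤ 0 := hmono.ge_of_tendsto (by simpa using ht.abs) n
  exact abs_nonpos_iff.mp hle

lemma eq_mul_pow_of_tendsto_zero {u : ℕ → ℝ} {σ τ : ℝ} (hτ : 1 ≤ |τ|)
    (hu : ∀ n, u (n + 2) = (σ + τ) * u (n + 1) - σ * τ * u n)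
    (ht : Tendsto u atTop (𝓝 0)) (n : ℕ) : u n = u 0 * σ ^ n := by
  have hstep : ∀ k, u (k + 1) - σ * u k = 0 := by
    refine eq_zero_of_tendsto_zero_of_succ_eq_mul hτ (fun k => ?_) ?_
    · rw [hu]; ring
    · simpa using ((tendsto_add_atTop_iff_nat 1).2 ht).sub (ht.const_mul σ)
  induction n with
  | zero => simp
  | succ k ih => rw [pow_succ, ← mul_assoc, ← ih]; linarith [hstep k]

section TwoSided

variable {β : ℤ → ℝ} {σ : ℝ}

lemma eq_mul_pow_of_tendsto_atTop (hσ : σ ≠ 0) (hσ1 : |σ| ≤ 1)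
    (hrec : ∀ n : ℤ, 0 < n → β (n + 1) + β (n - 1) = (σ + σ⁻¹) * β n)
    (ht : Tendsto β atTop (𝓝 0)) (n : ℕ) : β n = β 0 * σ ^ n := by
  have hτ : 1 ≤ |σ⁻¹| := by
    rw [abs_inv]
    exact (one_le_inv₀ (abs_pos.2 hσ)).2 hσ1
  refine eq_mul_pow_of_tendsto_zero (u := fun n : ℕ => β n) hτ (fun k => ?_)
    (ht.comp tendsto_natCast_atTop_atTop) n
  have h := hrec (k + 1) (by positivity)
  rw [add_sub_cancel_right, add_assoc, one_add_one_eq_two] at h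
  push_cast
  linear_combination h + β k * mul_inv_cancel₀ hσ

lemma eq_mul_pow_natAbs_of_tendsto (hσ : σ ≠ 0) (hσ1 : |σ| ≤ 1)
    (hrec : ∀ n : ℤ, n ≠ 0 → β (n + 1) + β (n - 1) = (σ + σ⁻¹) * β n)
    (ht : Tendsto β atTop (𝓝 0)) (hb : Tendsto β atBot (𝓝 0)) (n : ℤ) :
    β n = β 0 * σ ^ n.natAbs := by
  have hpos := eq_mul_pow_of_tendsto_atTop hσ hσ1 (fun n hn => hrec n hn.ne') ht
  have hneg := eq_mul_pow_of_tendsto_atTop (β := fun n => β (-n)) hσ hσ1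
    (fun n hn => by
      rw [neg_add', neg_sub', sub_neg_eq_add, add_comm]
      exact hrec (-n) (by omega))
    (hb.comp tendsto_neg_atTop_atBot)
  obtain ⟨k, rfl | rfl⟩ := Int.eq_nat_or_neg n
  · simpa using hpos k
  · simpa using hneg k

end TwoSided

section SymmetricGeometric

variable {σ : ℝ}

lemma pow_natAbs_add_one_add_pow_natAbs_sub_one (hσ : σ ≠ 0) {n : ℤ} (hn : n ≠ 0) :
    σ ^ (n + 1).natAbs + σ ^ (n - 1).natAbs = (σ + σ⁻¹) * σ ^ n.natAbs := by
  obtain ⟨k, rfl | rfl⟩ := Int.eq_nat_or_neg n <;>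
    obtain ⟨j, rfl⟩ := Nat.exists_eq_add_one_of_ne_zero (by omega : k ≠ 0)
  · rw [show (((j + 1 : ℕ) : ℤ) + 1).natAbs = j + 2 by omega,
      show (((j + 1 : ℕ) : ℤ) - 1).natAbs = j by omega, Int.natAbs_natCast]
    field_simp
    ring
  · rw [show (-((j + 1 : ℕ) : ℤ) + 1).natAbs = j by omega,
      show (-((j + 1 : ℕ) : ℤ) - 1).natAbs = j + 2 by omega, Int.natAbs_neg, Int.natAbs_natCast]
    field_simp
    ring

lemma tendsto_pow_natAbs (hσ : |σ| < 1) :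
    Tendsto (fun n : ℤ => σ ^ n.natAbs) (atBot ⊔ atTop) (𝓝 0) := by
  have hnatAbs : Tendsto Int.natAbs (atBot ⊔ atTop) atTop :=
    tendsto_sup.2 ⟨tendsto_atBot_atTop.2 fun b => ⟨-b, fun a ha => by omega⟩,
      tendsto_atTop_atTop.2 fun b => ⟨b, fun a ha => by omega⟩⟩
  exact (tendsto_pow_atTop_nhds_zero_of_abs_lt_one hσ).comp hnatAbs

end SymmetricGeometric

theorem decaying_solution_iff {β : ℤ → ℝ} {σ : ℝ} (d : ℝ) (hσ : σ ≠ 0) (hσ1 : |σ| < 1) :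
    ((∀ n : ℤ, β (n + 1) + β (n - 1) = (σ + σ⁻¹ - d * if n = 0 then 1 else 0) * β n) ∧
        Tendsto β atTop (𝓝 0) ∧ Tendsto β atBot (𝓝 0)) ↔
      ∃ c : ℝ, (∀ n : ℤ, β n = c * σ ^ n.natAbs) ∧ (c = 0 ∨ d = σ⁻¹ - σ) := by
  constructor
  · rintro ⟨hrec, ht, hb⟩
    have hform := eq_mul_pow_natAbs_of_tendsto hσ hσ1.le
      (fun n hn => by simpa [hn] using hrec n) ht hb
    have hdefect := hrec 0
    rw [zero_add, zero_sub, if_pos rfl, hform 1, hform (-1)] at hdefect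
    refine ⟨β 0, hform, ?_⟩
    have hfactor : β 0 * (d - (σ⁻¹ - σ)) = 0 := by
      simp only [Int.natAbs_one, Int.natAbs_neg, pow_one] at hdefect
      linear_combination hdefect
    exact (mul_eq_zero.1 hfactor).imp_right sub_eq_zero.1
  · rintro ⟨c, hβ, hc⟩
    obtain ⟨hb, ht⟩ := tendsto_sup.1 ((tendsto_pow_natAbs hσ1).const_mul c)
    simp only [mul_zero, ← hβ] at hb ht
    refine ⟨fun n => ?_, ht, hb⟩
    rw [hβ, hβ, hβ]
    by_cases hn : n = 0
    · have hfactor : c * (d - (σ⁻¹ - σ)) = 0 := mul_eq_zero.2 (hc.imp_right sub_eq_zero.2)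
      subst hn
      simp only [zero_add, zero_sub, if_pos, Int.natAbs_one, Int.natAbs_neg, Int.natAbs_zero,
        pow_one, pow_zero]
      linear_combination hfactor
    · rw [if_neg hn, mul_zero, sub_zero, mul_left_comm, ← mul_add,
        pow_natAbs_add_one_add_pow_natAbs_sub_one hσ hn]

theorem stmt_5_general (Ω ω m₀ : ℝ) (hω : 0 < ω) (hωΩ : ω < Ω) :
    let μ : ℝ := ω ^ 2 - Ω ^ 2
    let σ : ℝ := 1 - μ / 2 - Real.sqrt (μ ^ 2 - 4 * μ) / 2
    let ml : ℝ := (σ⁻¹ - σ) / ω ^ 2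
    (0 < σ ∧ σ < 1 ∧ σ + σ⁻¹ = 2 - μ) ∧
    (m₀ = ml →
      ∀ β : ℤ → ℝ,
        ((∀ n : ℤ, β (n + 1) - 2 * β n + β (n - 1) =
            -(ω ^ 2 * m₀ * (if n = 0 then 1 else 0) + μ) * β n) ∧
          Filter.Tendsto β Filter.atTop (nhds 0) ∧
          Filter.Tendsto β Filter.atBot (nhds 0)) ↔
        ∃ c : ℝ, ∀ n : ℤ, β n = c * σ ^ n.natAbs) ∧
    (m₀ ≠ ml →
      ∀ β : ℤ → ℝ,
        ((∀ n : ℤ, β (n + 1) - 2 * β n + β (n - 1) =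
            -(ω ^ 2 * m₀ * (if n = 0 then 1 else 0) + μ) * β n) ∧
          Filter.Tendsto β Filter.atTop (nhds 0) ∧
          Filter.Tendsto β Filter.atBot (nhds 0)) →
        ∀ n : ℤ, β n = 0) := by
  intro μ σ ml
  obtain ⟨hσ0, hσ1, hsum⟩ := stable_root_spec (σ := σ) (by nlinarith) rfl
  have hsolutions (β : ℤ → ℝ) :
      ((∀ n : ℤ, β (n + 1) - 2 * β n + β (n - 1) =
          -(ω ^ 2 * m₀ * (if n = 0 then 1 else 0) + μ) * β n) ∧
        Tendsto β atTop (𝓝 0) ∧ Tendsto β atBot (𝓝 0)) ↔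
      ∃ c : ℝ, (∀ n : ℤ, β n = c * σ ^ n.natAbs) ∧ (c = 0 ∨ ω ^ 2 * m₀ = σ⁻¹ - σ) := by
    rw [← decaying_solution_iff _ hσ0.ne' (abs_lt.2 ⟨by linarith, hσ1⟩)]
    refine and_congr (forall_congr' fun n => ⟨fun h => ?_, fun h => ?_⟩) Iff.rfl
    · linear_combination h - β n * hsum
    · linear_combination h + β n * hsum
  have hml : ω ^ 2 * m₀ = σ⁻¹ - σ ↔ m₀ = ml := by
    rw [eq_div_iff (by positivity), mul_comm]
  refine ⟨⟨hσ0, hσ1, hsum⟩, fun hm β => ?_, fun hm β h n => ?_⟩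
  · rw [hsolutions, hml.2 hm]
    simp only [or_true, and_true]
  · obtain ⟨c, hβ, hc⟩ := (hsolutions β).1 h
    rw [hβ, hc.resolve_right (mt hml.1 hm), zero_mul]

/-- Linear localized (impurity) modes of the linear defect recurrence:
with σ the stable root of σ² − (2−μ)σ + 1 = 0 and m_l(ω) = (σ⁻¹ − σ)/ω²,
decaying solutions exist iff m₀ = m_l(ω), in which case they are exactly
the multiples of σ^{|n|}. -/
theorem stmt_5 (Ω ω m₀ : ℝ) (hΩ : 0 < Ω) (hω : 0 < ω) (hωΩ : ω < Ω) :
    let μ : ℝ := ω ^ 2 - Ω ^ 2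
    let σ : ℝ := 1 - μ / 2 - Real.sqrt (μ ^ 2 - 4 * μ) / 2
    let ml : ℝ := (σ⁻¹ - σ) / ω ^ 2
    (0 < σ ∧ σ < 1 ∧ σ + σ⁻¹ = 2 - μ) ∧
    (m₀ = ml →
      ∀ β : ℤ → ℝ,
        ((∀ n : ℤ, β (n + 1) - 2 * β n + β (n - 1) =
            -(ω ^ 2 * m₀ * (if n = 0 then 1 else 0) + μ) * β n) ∧
          Filter.Tendsto β Filter.atTop (nhds 0) ∧
          Filter.Tendsto β Filter.atBot (nhds 0)) ↔
        ∃ c : ℝ, ∀ n : ℤ, β n = c * σ ^ n.natAbs) ∧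
    (m₀ ≠ ml →
      ∀ β : ℤ → ℝ,
        ((∀ n : ℤ, β (n + 1) - 2 * β n + β (n - 1) =
            -(ω ^ 2 * m₀ * (if n = 0 then 1 else 0) + μ) * β n) ∧
          Filter.Tendsto β Filter.atTop (nhds 0) ∧
          Filter.Tendsto β Filter.atBot (nhds 0)) →
        ∀ n : ℤ, β n = 0) :=
  stmt_5_general Ω ω m₀ hω hωΩ
end

section
/- Fix Ω > 0 and m₀ > 0. For ω ∈ (0,Ω) set μ = ω² − Ω² and m_l(ω) = √(μ² − 4μ)/ω². Then for ω ∈ (0,Ω), the equality m_l(ω) = m₀ holds if and only if ω² = (Ω² + 2 − √(4 + m₀² Ω² (Ω² + 4)))/(1 − m₀²) when m₀ ≠ 1, and if and only if ω² = (Ω² + 2)/2 − 2/(Ω² + 2) when m₀ = 1. In particular this determines a unique frequency ω_l(m₀) ∈ (0,Ω) of the linear defect mode. -/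
/-!
With x = ω² and μ = x − Ω², squaring √(μ² − 4μ) = m₀ x turns the defect condition into the
quadratic equation (1 − m₀²) x² − (2Ω² + 4) x + Ω²(Ω² + 4) = 0, whose value is Ω²(Ω² + 4) > 0
at x = 0 and −m₀²Ω⁴ < 0 at x = Ω², so it has a root in (0, Ω²). Writing q for the quadratic,
q(x) − q(y) = (x − y)((1 − m₀²)(x + y) − 2Ω² − 4) with the second factor negative on
[0, Ω² + 2), so this root is unique there; it is the root with the minus sign in the quadratic
formula (or the root of the linear equation when m₀ = 1).
-/

open Real Set

def defectQuadratic (Ω m₀ x : ℝ) : ℝ :=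
  (1 - m₀ ^ 2) * x ^ 2 - (2 * Ω ^ 2 + 4) * x + Ω ^ 2 * (Ω ^ 2 + 4)

theorem sqrt_div_eq_iff_defectQuadratic_eq_zero {Ω m₀ x : ℝ} (hx : 0 < x) (hm₀ : 0 < m₀) :
    √((x - Ω ^ 2) ^ 2 - 4 * (x - Ω ^ 2)) / x = m₀ ↔ defectQuadratic Ω m₀ x = 0 := by
  rw [div_eq_iff hx.ne', sqrt_eq_iff_mul_self_eq_of_pos (by positivity), defectQuadratic]
  constructor <;> intro h <;> linear_combination -h

theorem defectQuadratic_eq_zero_iff {Ω m₀ x : ℝ} (hm₀ : m₀ ^ 2 ≠ 1) (hx₀ : 0 ≤ x)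
    (hx : x ≤ Ω ^ 2 + 2) :
    defectQuadratic Ω m₀ x = 0 ↔
      x = (Ω ^ 2 + 2 - √(4 + m₀ ^ 2 * Ω ^ 2 * (Ω ^ 2 + 4))) / (1 - m₀ ^ 2) := by
  set S := √(4 + m₀ ^ 2 * Ω ^ 2 * (Ω ^ 2 + 4))
  have hS : S ^ 2 = 4 + m₀ ^ 2 * Ω ^ 2 * (Ω ^ 2 + 4) := sq_sqrt (by positivity)
  have hc : 1 - m₀ ^ 2 ≠ 0 := sub_ne_zero.2 (Ne.symm hm₀)
  rw [eq_div_iff hc, defectQuadratic]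
  constructor
  · intro hq
    -- completing the square: (Ω² + 2 − (1 − m₀²) x)² = S², and the left base is nonnegative
    have hsq : (Ω ^ 2 + 2 - (1 - m₀ ^ 2) * x) ^ 2 = S ^ 2 := by
      rw [hS]; linear_combination (1 - m₀ ^ 2) * hq
    have hbase : 0 ≤ Ω ^ 2 + 2 - (1 - m₀ ^ 2) * x := by nlinarith [sq_nonneg m₀]
    have := (pow_left_inj₀ hbase (sqrt_nonneg _) two_ne_zero).1 hsq
    linarith
  · intro hx
    refine (mul_eq_zero.1 ?_).resolve_left hc
    linear_combination ((1 - m₀ ^ 2) * x + (Ω ^ 2 + 2 - S) - (2 * Ω ^ 2 + 4)) * hx + hS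

theorem defectQuadratic_one_eq_zero_iff (Ω x : ℝ) :
    defectQuadratic Ω 1 x = 0 ↔ x = (Ω ^ 2 + 2) / 2 - 2 / (Ω ^ 2 + 2) := by
  have h : Ω ^ 2 + 2 ≠ 0 := by positivity
  rw [defectQuadratic, div_sub_div _ _ two_ne_zero h, eq_div_iff (by positivity)]
  constructor <;> intro h <;> linear_combination -h

theorem exists_defectQuadratic_eq_zero {Ω m₀ : ℝ} (hΩ : Ω ≠ 0) (hm₀ : m₀ ≠ 0) :
    ∃ x ∈ Ioo 0 (Ω ^ 2), defectQuadratic Ω m₀ x = 0 := by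
  have hcont : ContinuousOn (defectQuadratic Ω m₀) (Icc 0 (Ω ^ 2)) := by
    unfold defectQuadratic; fun_prop
  have hsign : (0 : ℝ) ∈ Ioo (defectQuadratic Ω m₀ (Ω ^ 2)) (defectQuadratic Ω m₀ 0) := by
    have h_end : defectQuadratic Ω m₀ (Ω ^ 2) = -(m₀ ^ 2 * Ω ^ 4) := by
      rw [defectQuadratic]; ring
    have h_start : defectQuadratic Ω m₀ 0 = Ω ^ 2 * (Ω ^ 2 + 4) := by
      rw [defectQuadratic]; ring
    rw [h_end, h_start]
    exact ⟨neg_neg_of_pos (by positivity), by positivity⟩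
  exact intermediate_value_Ioo' (sq_nonneg Ω) hcont hsign

theorem eq_of_defectQuadratic_eq_zero {Ω m₀ x y : ℝ} (hx : x ∈ Ico 0 (Ω ^ 2 + 2))
    (hy : y ∈ Ico 0 (Ω ^ 2 + 2)) (hqx : defectQuadratic Ω m₀ x = 0)
    (hqy : defectQuadratic Ω m₀ y = 0) : x = y := by
  have hfactor : (x - y) * ((1 - m₀ ^ 2) * (x + y) - (2 * Ω ^ 2 + 4)) = 0 := by
    rw [defectQuadratic] at hqx hqy; linear_combination hqx - hqy
  have hneg : (1 - m₀ ^ 2) * (x + y) - (2 * Ω ^ 2 + 4) < 0 := by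
    nlinarith [sq_nonneg m₀, hx.1, hy.1, hx.2, hy.2]
  exact sub_eq_zero.1 ((mul_eq_zero.1 hfactor).resolve_right hneg.ne)

/-- Frequency ω_l(m₀) of the linear defect mode: for ω ∈ (0,Ω), the critical mass
defect m_l(ω) = √(μ² − 4μ)/ω² equals m₀ iff ω² is given by the explicit formulas,
which determine a unique frequency ω_l(m₀) ∈ (0,Ω). -/
theorem stmt_6 (Ω m₀ : ℝ) (hΩ : 0 < Ω) (hm₀ : 0 < m₀) :
    let ml : ℝ → ℝ := fun ω =>
      Real.sqrt ((ω ^ 2 - Ω ^ 2) ^ 2 - 4 * (ω ^ 2 - Ω ^ 2)) / ω ^ 2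
    (∀ ω : ℝ, 0 < ω → ω < Ω →
      ((m₀ ≠ 1 → (ml ω = m₀ ↔
          ω ^ 2 = (Ω ^ 2 + 2 - Real.sqrt (4 + m₀ ^ 2 * Ω ^ 2 * (Ω ^ 2 + 4))) /
            (1 - m₀ ^ 2))) ∧
        (m₀ = 1 → (ml ω = m₀ ↔ ω ^ 2 = (Ω ^ 2 + 2) / 2 - 2 / (Ω ^ 2 + 2))))) ∧
    (∃! ω : ℝ, (0 < ω ∧ ω < Ω) ∧ ml ω = m₀) := by
  intro ml
  have ml_eq_iff (ω : ℝ) (hω : 0 < ω) : ml ω = m₀ ↔ defectQuadratic Ω m₀ (ω ^ 2) = 0 :=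
    sqrt_div_eq_iff_defectQuadratic_eq_zero (by positivity) hm₀
  have sq_mem_Ico {ω : ℝ} (hω : 0 < ω) (hωΩ : ω < Ω) : ω ^ 2 ∈ Ico 0 (Ω ^ 2 + 2) :=
    ⟨by positivity, by nlinarith⟩
  refine ⟨fun ω hω hωΩ => ⟨fun hm₀1 => ?_, fun hm₀1 => ?_⟩, ?_⟩
  · rw [ml_eq_iff ω hω]
    exact defectQuadratic_eq_zero_iff (by rwa [Ne, pow_eq_one_iff_of_nonneg hm₀.le two_ne_zero])
      (sq_mem_Ico hω hωΩ).1 (sq_mem_Ico hω hωΩ).2.le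
  · rw [ml_eq_iff ω hω, hm₀1]
    exact defectQuadratic_one_eq_zero_iff Ω (ω ^ 2)
  obtain ⟨x, ⟨hx₀, hxΩ⟩, hqx⟩ := exists_defectQuadratic_eq_zero hΩ.ne' hm₀.ne'
  have hω₀ : 0 < √x := sqrt_pos.2 hx₀
  have hω₀Ω : √x < Ω := (sqrt_lt' hΩ).2 hxΩ
  refine ⟨√x, ⟨⟨hω₀, hω₀Ω⟩, by rwa [ml_eq_iff _ hω₀, sq_sqrt hx₀.le]⟩, ?_⟩
  rintro ω ⟨⟨hω, hωΩ⟩, hml⟩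
  have hsq : ω ^ 2 = √x ^ 2 := by
    rw [sq_sqrt hx₀.le]
    exact eq_of_defectQuadratic_eq_zero (sq_mem_Ico hω hωΩ) ⟨hx₀.le, by linarith⟩
      ((ml_eq_iff ω hω).1 hml) hqx
  exact (pow_left_inj₀ hω.le hω₀.le two_ne_zero).1 hsq
end

section
/- Fix Ω > 0, 0 < ω < Ω, B > 0, and m₀ ≤ 0, and set μ = ω² − Ω² < 0. Then the only sequence (β_n)_{n∈ℤ} of real numbers satisfying β_{n+1} − 2β_n + β_{n−1} = −(ω² m₀ δ_{n,0} + μ) β_n + B β_n³ for all n ∈ ℤ with β_n → 0 as n → ±∞ is the zero sequence. In particular (taking m₀ = 0) the homogeneous truncated recurrence β_{n+1} − 2β_n + β_{n−1} = −μ β_n + B β_n³ has no nontrivial homoclinic orbit to 0 when B > 0 and μ < 0. -/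
/-!
Where `|β|` is maximal, `|β (n + 1) + β (n - 1)| ≤ 2 |β n|`. The recurrence writes this sum as
`c · β n` with `c = 2 - ω² m₀ δ_{n,0} - μ + B (β n)²`, and `c > 2` as soon as `β n ≠ 0` because
`μ < 0`, `m₀ ≤ 0` and `B > 0`. A sequence tending to `0` at `±∞` attains the maximum of `|β|`,
which must therefore be `0`.
-/

open Filter Topology

theorem Continuous.exists_forall_norm_le_of_tendsto_cocompact {X E : Type*} [TopologicalSpace X]
    [Nonempty X] [SeminormedAddCommGroup E] {f : X → E} (hf : Continuous f)
    (hlim : Tendsto f (cocompact X) (𝓝 0)) : ∃ x, ∀ y, ‖f y‖ ≤ ‖f x‖ := by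
  by_cases hzero : ∀ x, ‖f x‖ = 0
  · exact ⟨Classical.arbitrary X, fun y => by simp [hzero]⟩
  obtain ⟨x₀, hx₀⟩ := not_forall.mp hzero
  have hsmall : ∀ᶠ x in cocompact X, ‖f x‖ ≤ ‖f x₀‖ :=
    (tendsto_zero_iff_norm_tendsto_zero.mp hlim).eventually
      (ge_mem_nhds ((norm_nonneg _).lt_of_ne' hx₀))
  exact hf.norm.exists_forall_ge' x₀ hsmall

theorem Int.exists_forall_norm_le_of_tendsto {E : Type*} [SeminormedAddCommGroup E] {f : ℤ → E}
    (htop : Tendsto f atTop (𝓝 0)) (hbot : Tendsto f atBot (𝓝 0)) :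
    ∃ n, ∀ m, ‖f m‖ ≤ ‖f n‖ :=
  continuous_of_discreteTopology.exists_forall_norm_le_of_tendsto_cocompact
    (by rw [cocompact_eq_atBot_atTop]; exact hbot.sup htop)

theorem eq_zero_of_abs_le_of_add_eq_mul {a b c x : ℝ} (ha : |a| ≤ |x|) (hb : |b| ≤ |x|)
    (h : a + b = c * x) (hc : 2 < c) : x = 0 := by
  have hcx : c * |x| ≤ 2 * |x| :=
    calc c * |x| = |a + b| := by rw [h, abs_mul, abs_of_pos (show 0 < c by linarith)]
      _ ≤ |a| + |b| := abs_add_le a b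
      _ ≤ 2 * |x| := by linarith
  exact abs_eq_zero.mp (le_antisymm (by nlinarith [abs_nonneg x]) (abs_nonneg x))

theorem stmt_7_general (Ω ω B m₀ : ℝ) (hω : 0 < ω) (hωΩ : ω < Ω)
    (hB : 0 < B) (hm₀ : m₀ ≤ 0) (β : ℤ → ℝ)
    (hrec : ∀ n : ℤ, β (n + 1) - 2 * β n + β (n - 1) =
      -(ω ^ 2 * m₀ * (if n = 0 then 1 else 0) + (ω ^ 2 - Ω ^ 2)) * β n + B * β n ^ 3)
    (htop : Filter.Tendsto β Filter.atTop (nhds 0))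
    (hbot : Filter.Tendsto β Filter.atBot (nhds 0)) :
    ∀ n : ℤ, β n = 0 := by
  obtain ⟨n₀, hmax⟩ := Int.exists_forall_norm_le_of_tendsto htop hbot
  simp only [Real.norm_eq_abs] at hmax
  suffices hn₀ : β n₀ = 0 from fun n => abs_nonpos_iff.mp (by simpa [hn₀] using hmax n)
  by_contra hne
  set D := -(ω ^ 2 * m₀ * (if n₀ = 0 then 1 else 0)) + (Ω ^ 2 - ω ^ 2)
  have hD : 0 ≤ D := by
    have hδ : 0 ≤ -(ω ^ 2 * m₀ * (if n₀ = 0 then 1 else 0)) := by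
      split_ifs <;> nlinarith [sq_nonneg ω]
    nlinarith
  refine hne (eq_zero_of_abs_le_of_add_eq_mul (hmax (n₀ + 1)) (hmax (n₀ - 1))
    (c := 2 + D + B * β n₀ ^ 2) (by linear_combination hrec n₀) ?_)
  have hnonlin : 0 < B * β n₀ ^ 2 := by positivity
  linarith

/-- For a hard potential (B > 0) and a nonpositive mass defect m₀ ≤ 0, the only
homoclinic orbit to 0 of the truncated defect recurrence is the zero sequence. -/
theorem stmt_7 (Ω ω B m₀ : ℝ) (hΩ : 0 < Ω) (hω : 0 < ω) (hωΩ : ω < Ω)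
    (hB : 0 < B) (hm₀ : m₀ ≤ 0) (β : ℤ → ℝ)
    (hrec : ∀ n : ℤ, β (n + 1) - 2 * β n + β (n - 1) =
      -(ω ^ 2 * m₀ * (if n = 0 then 1 else 0) + (ω ^ 2 - Ω ^ 2)) * β n + B * β n ^ 3)
    (htop : Filter.Tendsto β Filter.atTop (nhds 0))
    (hbot : Filter.Tendsto β Filter.atBot (nhds 0)) :
    ∀ n : ℤ, β n = 0 :=
  stmt_7_general Ω ω B m₀ hω hωΩ hB hm₀ β hrec htop hbot
end

section
/- Fix Ω > 0, 0 < ω < Ω, B > 0, and set μ = ω² − Ω² < 0. Let (β_n)_{n∈ℤ} be a real sequence, not identically zero, satisfying β_{n+1} − 2β_n + β_{n−1} = −μ β_n + B β_n³ for all n ∈ ℤ and β_n → 0 as n → −∞. Then for every n ∈ ℤ one has |β_n| > |β_{n−1}| > 0. -/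
/-!
With `c = Ω² - ω² > 0` and `B ≥ 0`, the recurrence gives `(2 + c)|β n| ≤ |β (n-1)| + |β (n+1)|`.
So `|β|` is a discrete convex sequence tending to `0` at `-∞`; its increments increase and tend to
`0`, hence are nonnegative, and `|β|` is monotone. A zero of `β` would then make `β` vanish on a
whole left half-line, and the recurrence propagates this to all of `ℤ`. Once `|β| > 0`, the gain
`c |β (n-1)|` in the increments makes the growth strict.
-/

open Filter Topology

theorem mul_abs_le_abs_mul_add_mul_pow_three {k B : ℝ} (hk : 0 ≤ k) (hB : 0 ≤ B) (x : ℝ) :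
    k * |x| ≤ |k * x + B * x ^ 3| := by
  have hx : k * x + B * x ^ 3 = x * (k + B * x ^ 2) := by ring
  have hfac : 0 ≤ B * x ^ 2 := mul_nonneg hB (sq_nonneg x)
  rw [hx, abs_mul, abs_of_nonneg (add_nonneg hk hfac)]
  nlinarith [abs_nonneg x]

theorem Int.monotone_of_sub_le_sub_succ_of_tendsto_atBot {a : ℤ → ℝ}
    (hconv : ∀ n, a n - a (n - 1) ≤ a (n + 1) - a n) (hlim : Tendsto a atBot (𝓝 0)) :
    Monotone a := by
  have hdiff : Monotone fun n => a n - a (n - 1) :=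
    monotone_int_of_le_succ fun n => by simpa using hconv n
  have hdiff_lim : Tendsto (fun n => a n - a (n - 1)) atBot (𝓝 0) := by
    have hshift := hlim.comp (tendsto_atBot_add_const_right _ (-1) tendsto_id)
    simpa [sub_eq_add_neg] using hlim.sub hshift
  refine monotone_int_of_le_succ fun n => ?_
  have hinc := hdiff.le_of_tendsto hdiff_lim (n + 1)
  simp only [add_sub_cancel_right] at hinc
  linarith

theorem eq_zero_of_forall_le_eq_zero {β : ℤ → ℝ} {g : ℝ → ℝ} (hg : g 0 = 0)
    (hrec : ∀ n, β (n + 1) - 2 * β n + β (n - 1) = g (β n)) {m : ℤ}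
    (hm : ∀ k ≤ m, β k = 0) (n : ℤ) : β n = 0 := by
  have hfwd : ∀ n ≥ m, ∀ k ≤ n, β k = 0 := by
    intro n hn
    induction n, hn using Int.leInduction with
    | base => exact hm
    | succ n hmn ih =>
      intro k hk
      rcases (Int.le_add_one_iff.mp hk) with hk | rfl
      · exact ih k hk
      · have := hrec n
        rw [ih n le_rfl, ih (n - 1) (by omega), hg] at this
        linarith
  exact hfwd (max m n) (le_max_left _ _) n (le_max_right _ _)

theorem stmt_8_general (Ω ω B : ℝ) (hω : 0 < ω) (hωΩ : ω < Ω) (hB : 0 < B)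
    (β : ℤ → ℝ)
    (hrec : ∀ n : ℤ, β (n + 1) - 2 * β n + β (n - 1) =
      -(ω ^ 2 - Ω ^ 2) * β n + B * β n ^ 3)
    (hne : ∃ n, β n ≠ 0)
    (hbot : Filter.Tendsto β Filter.atBot (nhds 0)) :
    ∀ n : ℤ, 0 < |β (n - 1)| ∧ |β (n - 1)| < |β n| := by
  set c := Ω ^ 2 - ω ^ 2
  have hc : 0 < c := by nlinarith
  have hgrowth : ∀ n, (2 + c) * |β n| ≤ |β (n - 1)| + |β (n + 1)| := fun n =>
    calc (2 + c) * |β n| ≤ |(2 + c) * β n + B * β n ^ 3| :=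
          mul_abs_le_abs_mul_add_mul_pow_three (by linarith) hB.le _
      _ = |β (n - 1) + β (n + 1)| := by congr 1; linarith [hrec n]
      _ ≤ |β (n - 1)| + |β (n + 1)| := abs_add_le _ _
  have hmono : Monotone fun n => |β n| :=
    Int.monotone_of_sub_le_sub_succ_of_tendsto_atBot
      (fun n => by nlinarith [hgrowth n, abs_nonneg (β n)]) (by simpa using hbot.abs)
  have hpos : ∀ n, 0 < |β n| := by
    intro m
    by_contra! hm
    obtain ⟨p, hp⟩ := hne
    refine hp (eq_zero_of_forall_le_eq_zero (g := fun x => -(ω ^ 2 - Ω ^ 2) * x + B * x ^ 3)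
      (by simp) hrec (m := m) (fun k hk => ?_) p)
    exact abs_nonpos_iff.mp ((hmono hk).trans hm)
  intro n
  refine ⟨hpos _, ?_⟩
  have hstep := hgrowth (n - 1)
  rw [sub_add_cancel] at hstep
  nlinarith [hmono (show n - 1 - 1 ≤ n - 1 by omega), hpos (n - 1)]

/-- For a hard potential (B > 0), every nontrivial orbit of the homogeneous
truncated recurrence tending to 0 as n → −∞ (i.e. lying on the unstable
manifold) grows strictly in absolute value: |β_n| > |β_{n−1}| > 0. -/
theorem stmt_8 (Ω ω B : ℝ) (hΩ : 0 < Ω) (hω : 0 < ω) (hωΩ : ω < Ω) (hB : 0 < B)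
    (β : ℤ → ℝ)
    (hrec : ∀ n : ℤ, β (n + 1) - 2 * β n + β (n - 1) =
      -(ω ^ 2 - Ω ^ 2) * β n + B * β n ^ 3)
    (hne : ∃ n, β n ≠ 0)
    (hbot : Filter.Tendsto β Filter.atBot (nhds 0)) :
    ∀ n : ℤ, 0 < |β (n - 1)| ∧ |β (n - 1)| < |β n| :=
  stmt_8_general Ω ω B hω hωΩ hB β hrec hne hbot
end

section
/- Fix Ω > 0, 0 < ω < Ω, B > 0, m₀ ∈ ℝ, and set μ = ω² − Ω² < 0. Let (β_n)_{n∈ℤ} be a real sequence satisfying β_{n+1} − 2β_n + β_{n−1} = −(ω² m₀ δ_{n,0} + μ) β_n + B β_n³ for all n ∈ ℤ with β_n → 0 as n → ±∞. Then β_{−n} = β_n for all n ∈ ℤ, i.e. every homoclinic orbit to 0 of this defect recurrence is symmetric about the defect site n = 0. -/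
/-!
The antisymmetric part `u k = β k - β (-k)` vanishes at `k = 0`, and away from the defect it
solves a linear recurrence `u (k + 2) = c k * u (k + 1) - u k` with `c k ≥ 2`, because `μ < 0`
and the hard cubic term has a nonnegative difference quotient. For such a recurrence a nonnegative
initial slope propagates: the sequence is monotone, so it can tend to `0` only if it vanishes.
-/

open Filter Topology

section ConvexRecurrence

variable {u c : ℕ → ℝ}

theorem monotone_of_two_le_of_recurrence (hc : ∀ n, 2 ≤ c n)
    (hrec : ∀ n, u (n + 2) = c n * u (n + 1) - u n) (h0 : 0 ≤ u 0) (h01 : u 0 ≤ u 1) :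
    Monotone u := by
  have nonneg_and_le_succ : ∀ n, 0 ≤ u n ∧ u n ≤ u (n + 1) := by
    intro n
    induction n with
    | zero => exact ⟨h0, h01⟩
    | succ n ih =>
      obtain ⟨hpos, hinc⟩ := ih
      refine ⟨hpos.trans hinc, ?_⟩
      -- `u (n + 2) - u (n + 1) = (c n - 2) * u (n + 1) + (u (n + 1) - u n)`
      rw [hrec n]
      nlinarith [hc n]
  exact monotone_nat_of_le_succ fun n => (nonneg_and_le_succ n).2

theorem eq_zero_of_two_le_of_recurrence (hc : ∀ n, 2 ≤ c n)
    (hrec : ∀ n, u (n + 2) = c n * u (n + 1) - u n) (h0 : u 0 = 0)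
    (hu : Tendsto u atTop (𝓝 0)) (n : ℕ) : u n = 0 := by
  wlog h01 : 0 ≤ u 1 generalizing u
  · have hneg := this (u := -u) (fun n => by simp only [Pi.neg_apply, hrec n]; ring)
      (by simp [h0]) (by rw [← neg_zero]; exact hu.neg) (by simp only [Pi.neg_apply]; linarith)
    simpa using hneg
  have hmono := monotone_of_two_le_of_recurrence hc hrec h0.ge (h0 ▸ h01)
  exact le_antisymm (hmono.ge_of_tendsto hu n) (h0 ▸ hmono n.zero_le)

end ConvexRecurrence

theorem sub_neg_recurrence {μ B : ℝ} {β : ℤ → ℝ}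
    (hrec : ∀ n : ℤ, n ≠ 0 → β (n + 1) - 2 * β n + β (n - 1) = -μ * β n + B * β n ^ 3)
    {n : ℤ} (hn : n ≠ 0) :
    β (n + 1) - β (-(n + 1)) =
      (2 - μ + B * (β n ^ 2 + β n * β (-n) + β (-n) ^ 2)) * (β n - β (-n)) -
        (β (n - 1) - β (-(n - 1))) := by
  have hpos := hrec n hn
  have hneg := hrec (-n) (neg_ne_zero.mpr hn)
  rw [show -n + 1 = -(n - 1) by ring, show -n - 1 = -(n + 1) by ring] at hneg
  linear_combination hpos - hneg

theorem two_le_two_sub_add_mul {μ B : ℝ} (hμ : μ ≤ 0) (hB : 0 ≤ B) (a b : ℝ) :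
    2 ≤ 2 - μ + B * (a ^ 2 + a * b + b ^ 2) := by
  have : 0 ≤ a ^ 2 + a * b + b ^ 2 := by nlinarith [sq_nonneg (a + b), sq_nonneg a, sq_nonneg b]
  nlinarith

theorem stmt_9_general (Ω ω B m₀ : ℝ) (hω : 0 < ω) (hωΩ : ω < Ω)
    (hB : 0 < B) (β : ℤ → ℝ)
    (hrec : ∀ n : ℤ, β (n + 1) - 2 * β n + β (n - 1) =
      -(ω ^ 2 * m₀ * (if n = 0 then 1 else 0) + (ω ^ 2 - Ω ^ 2)) * β n + B * β n ^ 3)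
    (htop : Filter.Tendsto β Filter.atTop (nhds 0))
    (hbot : Filter.Tendsto β Filter.atBot (nhds 0)) :
    ∀ n : ℤ, β (-n) = β n := by
  have hμ : ω ^ 2 - Ω ^ 2 ≤ 0 := by nlinarith
  have hrec_off_defect : ∀ n : ℤ, n ≠ 0 → β (n + 1) - 2 * β n + β (n - 1) =
      -(ω ^ 2 - Ω ^ 2) * β n + B * β n ^ 3 := fun n hn => by simpa [hn] using hrec n
  have hu : Tendsto (fun k : ℕ => β k - β (-k)) atTop (𝓝 0) := by
    rw [← sub_zero 0]
    exact (htop.sub (hbot.comp tendsto_neg_atTop_atBot)).comp tendsto_natCast_atTop_atTop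
  have hodd := eq_zero_of_two_le_of_recurrence
    (c := fun k => 2 - (ω ^ 2 - Ω ^ 2) +
      B * (β (k + 1) ^ 2 + β (k + 1) * β (-(k + 1)) + β (-(k + 1)) ^ 2))
    (fun k => two_le_two_sub_add_mul hμ hB.le _ _)
    (fun k => by simpa [add_assoc, one_add_one_eq_two] using
      sub_neg_recurrence hrec_off_defect (n := (k : ℤ) + 1) (by omega))
    (by simp) hu
  intro n
  obtain ⟨k, rfl | rfl⟩ := Int.eq_nat_or_neg n
  · linarith [hodd k]
  · rw [neg_neg]; linarith [hodd k]

/-- For a hard potential (B > 0), every homoclinic orbit to 0 of the single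
mass-defect recurrence is symmetric about the defect site: β_{−n} = β_n. -/
theorem stmt_9 (Ω ω B m₀ : ℝ) (hΩ : 0 < Ω) (hω : 0 < ω) (hωΩ : ω < Ω)
    (hB : 0 < B) (β : ℤ → ℝ)
    (hrec : ∀ n : ℤ, β (n + 1) - 2 * β n + β (n - 1) =
      -(ω ^ 2 * m₀ * (if n = 0 then 1 else 0) + (ω ^ 2 - Ω ^ 2)) * β n + B * β n ^ 3)
    (htop : Filter.Tendsto β Filter.atTop (nhds 0))
    (hbot : Filter.Tendsto β Filter.atBot (nhds 0)) :
    ∀ n : ℤ, β (-n) = β n :=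
  stmt_9_general Ω ω B m₀ hω hωΩ hB β hrec htop hbot
end

section
/- Fix n₀ ∈ ℕ, μ ∈ ℝ with |μ| ≤ 1, B ∈ ℝ, and real sequences (θ_n), (κ_n) with θ_n = κ_n = 0 for |n| > n₀ and |κ_n| < 1, and set ε = max(sup_n |θ_n|, sup_n |κ_n|). Define L = [[0,1],[−1,2−μ]], T_n = [[0,0],[θ_n + (μ−2)κ_n, κ_n]], L_n = (I+T_n)L, the maps F(α,β) = (β, −α + (2−μ)β + Bβ³) and F_n(α,β) = (β, −(1+κ_n)α + (2+θ_n−μ)β + Bβ³), the matrices A_{−n₀−1} = I and A_n = L_n L_{n−1} ⋯ L_{−n₀} L^{−(n+n₀+1)} for −n₀ ≤ n ≤ n₀, and the maps F̂_n = A_n ∘ F ∘ A_{n−1}^{−1} for −n₀ ≤ n ≤ n₀. Then: (i) there exists C > 0 depending only on n₀ and B such that if ε ≤ 1/2 then for each −n₀ ≤ n ≤ n₀ and every U ∈ ℝ², ‖F̂_n(U) − F_n(U)‖ ≤ C ε ‖U‖³; (ii) F̂_{n₀} ∘ F̂_{n₀−1} ∘ ⋯ ∘ F̂_{−n₀} =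 A_{n₀} ∘ F^{2n₀+1}; (iii) ‖A_{n₀} − I‖ ≤ C ε for some C depending only on n₀ (when ε ≤ 1/2 and |μ| ≤ 1). -/
/-!
Since `A_n = L_n A_{n-1} L⁻¹`, we have `A_n L = L_n A_{n-1}`, so conjugating the linear part of
`F` by the `A_n` reproduces the linear part of `F_n` exactly. Hence `F̂_n U - F_n U` only involves
the cubic term, evaluated at `A_{n-1}⁻¹ U` instead of `U` and multiplied by `A_n` instead of `1`,
and is `O(ε ‖U‖³)` as soon as `A_n - 1` and `A_n⁻¹ - 1` are `O(ε)`. The latter holds because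
`M ↦ P M Q` moves `M - 1` by `P (M - 1) Q + (P Q - 1)`, and the one-step defects
`L_n L⁻¹ - 1 = T_n` and `L L_n⁻¹ - 1` are `O(ε)`. The composition identity is a telescoping of the
conjugations.
-/

attribute [local instance] Matrix.normedAddCommGroup

open Matrix

namespace Matrix

variable {l m n α : Type*} [Fintype l] [Fintype m] [Fintype n] [NormedRing α]

theorem norm_mul_le_card_mul_norm_mul (A : Matrix l m α) (B : Matrix m n α) :
    ‖A * B‖ ≤ Fintype.card m * ‖A‖ * ‖B‖ := by
  rw [norm_le_iff (by positivity)]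
  intro i k
  calc ‖∑ j, A i j * B j k‖ ≤ ∑ j, ‖A i j‖ * ‖B j k‖ :=
        (norm_sum_le _ _).trans (Finset.sum_le_sum fun j _ => norm_mul_le _ _)
    _ ≤ ∑ _j : m, ‖A‖ * ‖B‖ := Finset.sum_le_sum fun j _ =>
        mul_le_mul (norm_entry_le_entrywise_sup_norm A) (norm_entry_le_entrywise_sup_norm B)
          (norm_nonneg _) (norm_nonneg _)
    _ = Fintype.card m * ‖A‖ * ‖B‖ := by simp [mul_assoc]

theorem norm_mulVec_le_card_mul_norm_mul (A : Matrix m n α) (v : n → α) :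
    ‖A *ᵥ v‖ ≤ Fintype.card n * ‖A‖ * ‖v‖ := by
  rw [pi_norm_le_iff_of_nonneg (by positivity)]
  intro i
  calc ‖∑ j, A i j * v j‖ ≤ ∑ j, ‖A i j‖ * ‖v j‖ :=
        (norm_sum_le _ _).trans (Finset.sum_le_sum fun j _ => norm_mul_le _ _)
    _ ≤ ∑ _j : n, ‖A‖ * ‖v‖ := Finset.sum_le_sum fun j _ =>
        mul_le_mul (norm_entry_le_entrywise_sup_norm A) (norm_le_pi_norm v j)
          (norm_nonneg _) (norm_nonneg _)
    _ = Fintype.card n * ‖A‖ * ‖v‖ := by simp [mul_assoc]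

theorem norm_of_fin_two_le {a b c d : α} {r : ℝ} (ha : ‖a‖ ≤ r) (hb : ‖b‖ ≤ r) (hc : ‖c‖ ≤ r)
    (hd : ‖d‖ ≤ r) : ‖!![a, b; c, d]‖ ≤ r := by
  rw [norm_le_iff ((norm_nonneg a).trans ha)]
  intro i j
  fin_cases i <;> fin_cases j <;> assumption

end Matrix

theorem norm_fin_two_mulVec_le (A : Matrix (Fin 2) (Fin 2) ℝ) (v : Fin 2 → ℝ) :
    ‖A *ᵥ v‖ ≤ 2 * ‖A‖ * ‖v‖ := by
  simpa using norm_mulVec_le_card_mul_norm_mul A v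

theorem norm_conj_sub_one_le_pow {n α : Type*} [Fintype n] [DecidableEq n] [NormedRing α]
    (M P Q : ℕ → Matrix n n α) {p q δ : ℝ} (h0 : M 0 = 1)
    (hM : ∀ k, M (k + 1) = P k * M k * Q k) (hP : ∀ k, ‖P k‖ ≤ p) (hQ : ∀ k, ‖Q k‖ ≤ q)
    (hPQ : ∀ k, ‖P k * Q k - 1‖ ≤ δ) (k : ℕ) :
    ‖M k - 1‖ ≤ ((Fintype.card n : ℝ) ^ 2 * p * q + 1) ^ k * δ := by
  set c : ℝ := (Fintype.card n : ℝ)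
  have hp : 0 ≤ p := (norm_nonneg _).trans (hP 0)
  have hq : 0 ≤ q := (norm_nonneg _).trans (hQ 0)
  have hδ : 0 ≤ δ := (norm_nonneg _).trans (hPQ 0)
  induction k with
  | zero => simp [h0, hδ]
  | succ k ih =>
    have hsplit : M (k + 1) - 1 = P k * (M k - 1) * Q k + (P k * Q k - 1) := by
      rw [hM]; noncomm_ring
    have hconj : ‖P k * (M k - 1) * Q k‖ ≤ c ^ 2 * p * q * ‖M k - 1‖ := by
      calc ‖P k * (M k - 1) * Q k‖ ≤ c * (c * ‖P k‖ * ‖M k - 1‖) * ‖Q k‖ := by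
            refine (norm_mul_le_card_mul_norm_mul _ _).trans ?_
            gcongr
            exact norm_mul_le_card_mul_norm_mul _ _
        _ ≤ c * (c * p * ‖M k - 1‖) * q := by gcongr; exacts [hP k, hQ k]
        _ = c ^ 2 * p * q * ‖M k - 1‖ := by ring
    have hbase : 1 ≤ c ^ 2 * p * q + 1 :=
      le_add_of_nonneg_left (mul_nonneg (mul_nonneg (sq_nonneg c) hp) hq)
    calc ‖M (k + 1) - 1‖ ≤ c ^ 2 * p * q * ‖M k - 1‖ + δ := by
          rw [hsplit]; exact (norm_add_le _ _).trans (add_le_add hconj (hPQ k))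
      _ ≤ c ^ 2 * p * q * ((c ^ 2 * p * q + 1) ^ k * δ) + (c ^ 2 * p * q + 1) ^ k * δ := by
          gcongr
          exact le_mul_of_one_le_left hδ (one_le_pow₀ hbase)
      _ = (c ^ 2 * p * q + 1) ^ (k + 1) * δ := by ring

theorem isUnit_det_of_conj_recursion {n R : Type*} [Fintype n] [DecidableEq n] [CommRing R]
    (M P Q : ℕ → Matrix n n R) (h0 : M 0 = 1) (hM : ∀ k, M (k + 1) = P k * M k * Q k)
    (hP : ∀ k, IsUnit (P k).det) (hQ : ∀ k, IsUnit (Q k).det) (k : ℕ) : IsUnit (M k).det := by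
  induction k with
  | zero => simp [h0]
  | succ k ih => rw [hM, det_mul, det_mul]; exact ((hP k).mul ih).mul (hQ k)

theorem eq_mulVec_iterate_of_conj {ι R : Type*} [Fintype ι] [DecidableEq ι] [CommRing R]
    (F : (ι → R) → ι → R) (A : ℤ → Matrix ι ι R) (m : ℤ) (N : ℕ) (h0 : A (m - 1) = 1)
    (hA : ∀ j < N, IsUnit (A (m + j - 1)).det) (V : ℕ → ι → R)
    (hV : ∀ j < N, V (j + 1) = A (m + j) *ᵥ F ((A (m + j - 1))⁻¹ *ᵥ V j)) :
    ∀ j ≤ N, V j = A (m + j - 1) *ᵥ F^[j] (V 0) := by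
  intro j
  induction j with
  | zero => simp [h0]
  | succ j ih =>
    intro hj
    rw [hV j hj, ih (Nat.le_of_succ_le hj), mulVec_mulVec, nonsing_inv_mul _ (hA j hj),
      one_mulVec, Function.iterate_succ_apply', show m + ↑(j + 1) - 1 = m + j by push_cast; ring]

theorem List.map_range_succ_sub {M : Type*} (f : ℤ → M) (n : ℤ) (k : ℕ) :
    ((List.range (k + 1)).map fun j => f (n - j)) =
      f n :: ((List.range k).map fun j => f (n - 1 - j)) := by
  simp only [List.range_succ_eq_map]
  simp [← List.map_eq_flatMap]
  intro a _
  ring_nf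

/-- The paper's `A_n = L_n L_{n-1} ⋯ L_{-n₀} L^{-(n+n₀+1)}`; because of `Int.toNat` it is `1` for
every `n ≤ -n₀ - 1`. -/
def correction {M : Type*} [Monoid M] [Inv M] (L : M) (Ln : ℤ → M) (n₀ : ℕ) (n : ℤ) : M :=
  ((List.range (n + n₀ + 1).toNat).map fun j => Ln (n - j)).prod * L⁻¹ ^ (n + n₀ + 1).toNat

section Correction

variable {M : Type*} [Monoid M] [Inv M] (L : M) (Ln : ℤ → M) (n₀ : ℕ)

theorem correction_neg_sub_one : correction L Ln n₀ (-n₀ - 1) = 1 := by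
  simp [correction, show (-(n₀ : ℤ) - 1 + n₀ + 1).toNat = 0 by omega]

theorem correction_eq_mul_correction_mul {n : ℤ} (hn : -(n₀ : ℤ) ≤ n) :
    correction L Ln n₀ n = Ln n * correction L Ln n₀ (n - 1) * L⁻¹ := by
  rw [correction, correction, show (n + n₀ + 1).toNat = (n - 1 + n₀ + 1).toNat + 1 by omega,
    List.map_range_succ_sub, List.prod_cons, pow_succ]
  simp only [mul_assoc]

end Correction

/-- `homLin μ` and `siteLin μ θ κ` are the paper's `L` and `L_n = (I + T_n) L`, multiplied out. -/
def homLin (μ : ℝ) : Matrix (Fin 2) (Fin 2) ℝ := !![0, 1; -1, 2 - μ]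

def siteLin (μ θ κ : ℝ) : Matrix (Fin 2) (Fin 2) ℝ := !![0, 1; -(1 + κ), 2 + θ - μ]

def cubicTerm (B : ℝ) (v : Fin 2 → ℝ) : Fin 2 → ℝ := ![0, B * v 1 ^ 3]

theorem homMap_eq (μ B : ℝ) (U : Fin 2 → ℝ) :
    ![U 1, -U 0 + (2 - μ) * U 1 + B * U 1 ^ 3] = homLin μ *ᵥ U + cubicTerm B U := by
  ext i; fin_cases i <;> simp [homLin, cubicTerm, dotProduct]

theorem siteMap_eq (μ θ κ B : ℝ) (U : Fin 2 → ℝ) :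
    ![U 1, -(1 + κ) * U 0 + (2 + θ - μ) * U 1 + B * U 1 ^ 3] =
      siteLin μ θ κ *ᵥ U + cubicTerm B U := by
  ext i; fin_cases i <;> simp [siteLin, cubicTerm, dotProduct]

theorem one_add_mul_homLin (μ θ κ : ℝ) :
    (1 + !![0, 0; θ + (μ - 2) * κ, κ]) * homLin μ = siteLin μ θ κ := by
  ext i j; fin_cases i <;> fin_cases j <;> simp [homLin, siteLin, one_fin_two]; ring

theorem det_homLin (μ : ℝ) : (homLin μ).det = 1 := by
  simp [homLin, det_fin_two_of]

theorem det_siteLin (μ θ κ : ℝ) : (siteLin μ θ κ).det = 1 + κ := by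
  simp [siteLin, det_fin_two_of]

theorem homLin_inv (μ : ℝ) : (homLin μ)⁻¹ = !![2 - μ, -1; 1, 0] := by
  simp [inv_def, homLin, adjugate_fin_two_of]

theorem siteLin_inv {μ θ κ : ℝ} (hκ : 1 + κ ≠ 0) :
    (siteLin μ θ κ)⁻¹ = !![(2 + θ - μ) / (1 + κ), -1 / (1 + κ); 1, 0] := by
  rw [inv_def, siteLin, adjugate_fin_two_of, det_fin_two_of, Ring.inverse_eq_inv']
  ext i j; fin_cases i <;> fin_cases j <;> field_simp <;> simp <;> field_simp

theorem abs_div_one_add_le {κ : ℝ} (hκ : |κ| ≤ 1 / 2) (x : ℝ) : |x / (1 + κ)| ≤ 2 * |x| := by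
  have hpos : 1 / 2 ≤ 1 + κ := by linarith [neg_abs_le κ]
  rw [abs_div, abs_of_pos (a := 1 + κ) (by linarith), div_le_iff₀ (by linarith)]
  nlinarith [abs_nonneg x]

section SiteBounds

variable {μ θ κ ε : ℝ}

theorem abs_two_sub_le (hμ : |μ| ≤ 1) : |2 - μ| ≤ 3 :=
  abs_le.mpr ⟨by linarith [le_abs_self μ], by linarith [neg_abs_le μ]⟩

theorem norm_homLin_le (hμ : |μ| ≤ 1) : ‖homLin μ‖ ≤ 3 := by
  apply norm_of_fin_two_le <;> simp [abs_two_sub_le hμ]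

theorem norm_homLin_inv_le (hμ : |μ| ≤ 1) : ‖(homLin μ)⁻¹‖ ≤ 3 := by
  rw [homLin_inv]
  apply norm_of_fin_two_le <;> simp [abs_two_sub_le hμ]

theorem norm_siteLin_le (hμ : |μ| ≤ 1) (hθ : |θ| ≤ ε) (hκ : |κ| ≤ ε) (hε : ε ≤ 1 / 2) :
    ‖siteLin μ θ κ‖ ≤ 4 := by
  have := abs_le.mp hμ; have := abs_le.mp hθ; have := abs_le.mp hκ
  apply norm_of_fin_two_le <;> simp only [norm_zero, norm_one, norm_neg, Real.norm_eq_abs]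
  · norm_num
  · norm_num
  · exact abs_le.mpr ⟨by linarith, by linarith⟩
  · exact abs_le.mpr ⟨by linarith, by linarith⟩

theorem norm_siteLin_inv_le (hμ : |μ| ≤ 1) (hθ : |θ| ≤ ε) (hκ : |κ| ≤ ε) (hε : ε ≤ 1 / 2) :
    ‖(siteLin μ θ κ)⁻¹‖ ≤ 7 := by
  have hκ' : |κ| ≤ 1 / 2 := hκ.trans hε
  have := abs_le.mp hμ; have := abs_le.mp hθ; have := abs_le.mp hκ'
  rw [siteLin_inv (by linarith)]
  apply norm_of_fin_two_le <;> simp only [Real.norm_eq_abs]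
  · refine (abs_div_one_add_le hκ' _).trans ?_
    have : |2 + θ - μ| ≤ 7 / 2 := abs_le.mpr ⟨by linarith, by linarith⟩
    linarith
  · exact (abs_div_one_add_le hκ' _).trans (by norm_num)
  all_goals norm_num

theorem norm_siteLin_mul_homLin_inv_sub_one_le (hμ : |μ| ≤ 1) (hθ : |θ| ≤ ε) (hκ : |κ| ≤ ε) :
    ‖siteLin μ θ κ * (homLin μ)⁻¹ - 1‖ ≤ 4 * ε := by
  have hε0 : 0 ≤ ε := (abs_nonneg _).trans hθ
  have : |θ + (μ - 2) * κ| ≤ 4 * ε := by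
    calc |θ + (μ - 2) * κ| ≤ |θ| + |2 - μ| * |κ| := by
          rw [abs_sub_comm 2, ← abs_mul]; exact abs_add_le _ _
      _ ≤ ε + 3 * ε := by gcongr; exact abs_two_sub_le hμ
      _ = 4 * ε := by ring
  rw [← one_add_mul_homLin, mul_assoc, mul_nonsing_inv _ (by simp [det_homLin]), mul_one,
    add_sub_cancel_left]
  apply norm_of_fin_two_le <;> simp <;> linarith

theorem norm_homLin_mul_siteLin_inv_sub_one_le (hμ : |μ| ≤ 1) (hθ : |θ| ≤ ε) (hκ : |κ| ≤ ε)
    (hε : ε ≤ 1 / 2) : ‖homLin μ * (siteLin μ θ κ)⁻¹ - 1‖ ≤ 8 * ε := by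
  have hκ' : |κ| ≤ 1 / 2 := hκ.trans hε
  have h1 : 1 + κ ≠ 0 := by linarith [neg_abs_le κ]
  have : homLin μ * (siteLin μ θ κ)⁻¹ - 1 =
      !![0, 0; ((2 - μ) * κ - θ) / (1 + κ), -κ / (1 + κ)] := by
    rw [siteLin_inv h1]
    ext i j; fin_cases i <;> fin_cases j <;> simp [homLin, one_fin_two] <;> field_simp <;> ring
  have hnum : |(2 - μ) * κ - θ| ≤ 4 * ε := by
    calc |(2 - μ) * κ - θ| ≤ |2 - μ| * |κ| + |θ| := by rw [← abs_mul]; exact abs_sub _ _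
      _ ≤ 3 * ε + ε := by gcongr; exact abs_two_sub_le hμ
      _ = 4 * ε := by ring
  rw [this]
  have hε0 : 0 ≤ ε := (abs_nonneg κ).trans hκ
  apply norm_of_fin_two_le <;> simp only [norm_zero, Real.norm_eq_abs]
  · positivity
  · positivity
  · exact (abs_div_one_add_le hκ' _).trans (by linarith)
  · exact (abs_div_one_add_le hκ' _).trans (by rw [abs_neg]; linarith)

end SiteBounds

theorem norm_cubicTerm_le (B : ℝ) (v : Fin 2 → ℝ) : ‖cubicTerm B v‖ ≤ |B| * ‖v‖ ^ 3 := by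
  rw [pi_norm_le_iff_of_nonneg (by positivity)]
  intro i
  fin_cases i
  · simp [cubicTerm]; positivity
  · show ‖B * v 1 ^ 3‖ ≤ _
    rw [Real.norm_eq_abs, abs_mul, abs_pow]
    gcongr
    exact norm_le_pi_norm v 1

theorem norm_cubicTerm_sub_le (B : ℝ) {v w : Fin 2 → ℝ} {R : ℝ} (hv : ‖v‖ ≤ R) (hw : ‖w‖ ≤ R) :
    ‖cubicTerm B v - cubicTerm B w‖ ≤ 3 * |B| * R ^ 2 * ‖v - w‖ := by
  have hR : 0 ≤ R := (norm_nonneg v).trans hv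
  rw [pi_norm_le_iff_of_nonneg (by positivity)]
  intro i
  fin_cases i
  · simp [cubicTerm]; positivity
  · have hv1 : |v 1| ≤ R := (norm_le_pi_norm v 1).trans hv
    have hw1 : |w 1| ≤ R := (norm_le_pi_norm w 1).trans hw
    have hquad : |v 1 ^ 2 + v 1 * w 1 + w 1 ^ 2| ≤ 3 * R ^ 2 := by
      calc |v 1 ^ 2 + v 1 * w 1 + w 1 ^ 2| ≤ |v 1| ^ 2 + |v 1| * |w 1| + |w 1| ^ 2 := by
            rw [← abs_pow, ← abs_pow, ← abs_mul]; exact abs_add_three _ _ _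
        _ ≤ R ^ 2 + R * R + R ^ 2 := by gcongr
        _ = 3 * R ^ 2 := by ring
    calc ‖B * v 1 ^ 3 - B * w 1 ^ 3‖ = |B| * |v 1 ^ 2 + v 1 * w 1 + w 1 ^ 2| * |(v - w) 1| := by
          rw [Real.norm_eq_abs, ← abs_mul, ← abs_mul, Pi.sub_apply]; ring_nf
      _ ≤ |B| * (3 * R ^ 2) * ‖v - w‖ := by gcongr; exact norm_le_pi_norm (v - w) 1
      _ = 3 * |B| * R ^ 2 * ‖v - w‖ := by ring

theorem norm_conj_add_cubicTerm_sub_le {A A' L Ln : Matrix (Fin 2) (Fin 2) ℝ} {B δ : ℝ}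
    (hA' : IsUnit A'.det) (hcomm : A * L = Ln * A') (hA : ‖A - 1‖ ≤ δ) (hA'inv : ‖A'⁻¹ - 1‖ ≤ δ)
    (U : Fin 2 → ℝ) :
    ‖A *ᵥ (L *ᵥ (A'⁻¹ *ᵥ U) + cubicTerm B (A'⁻¹ *ᵥ U)) - (Ln *ᵥ U + cubicTerm B U)‖ ≤
      8 * |B| * (1 + 2 * δ) ^ 3 * δ * ‖U‖ ^ 3 := by
  set W := A'⁻¹ *ᵥ U
  have hδ : 0 ≤ δ := (norm_nonneg _).trans hA
  have hAW : A' *ᵥ W = U := by rw [mulVec_mulVec, mul_nonsing_inv _ hA', one_mulVec]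
  have hsplit : A *ᵥ (L *ᵥ W + cubicTerm B W) - (Ln *ᵥ U + cubicTerm B U) =
      (A - 1) *ᵥ cubicTerm B W + (cubicTerm B W - cubicTerm B U) := by
    rw [mulVec_add, mulVec_mulVec, hcomm, ← mulVec_mulVec, hAW, sub_mulVec, one_mulVec]
    abel
  rw [hsplit]
  have hWU : ‖W - U‖ ≤ 2 * δ * ‖U‖ := by
    calc ‖W - U‖ = ‖(A'⁻¹ - 1) *ᵥ U‖ := by rw [sub_mulVec, one_mulVec]
      _ ≤ 2 * ‖A'⁻¹ - 1‖ * ‖U‖ := norm_fin_two_mulVec_le _ _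
      _ ≤ 2 * δ * ‖U‖ := by gcongr
  have hW : ‖W‖ ≤ (1 + 2 * δ) * ‖U‖ := by
    calc ‖W‖ ≤ ‖U‖ + ‖W - U‖ := norm_le_insert' W U
      _ ≤ (1 + 2 * δ) * ‖U‖ := by linarith
  have hU : ‖U‖ ≤ (1 + 2 * δ) * ‖U‖ := le_mul_of_one_le_left (norm_nonneg U) (by linarith)
  calc ‖(A - 1) *ᵥ cubicTerm B W + (cubicTerm B W - cubicTerm B U)‖
      ≤ 2 * ‖A - 1‖ * ‖cubicTerm B W‖ + ‖cubicTerm B W - cubicTerm B U‖ :=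
        (norm_add_le _ _).trans (add_le_add (norm_fin_two_mulVec_le _ _) le_rfl)
    _ ≤ 2 * δ * (|B| * ((1 + 2 * δ) * ‖U‖) ^ 3) +
          3 * |B| * ((1 + 2 * δ) * ‖U‖) ^ 2 * (2 * δ * ‖U‖) := by
        gcongr
        · exact (norm_cubicTerm_le B W).trans (by gcongr)
        · exact (norm_cubicTerm_sub_le B hW hU).trans (by gcongr)
    _ ≤ 8 * |B| * (1 + 2 * δ) ^ 3 * δ * ‖U‖ ^ 3 := by
        have : (1 + 2 * δ) ^ 2 ≤ (1 + 2 * δ) ^ 3 := pow_le_pow_right₀ (by linarith) (by norm_num)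
        have := mul_le_mul_of_nonneg_left this (by positivity : 0 ≤ |B| * δ * ‖U‖ ^ 3)
        nlinarith

theorem site_recursion_estimates {μ ε : ℝ} {θ κ : ℕ → ℝ} {M : ℕ → Matrix (Fin 2) (Fin 2) ℝ}
    (hμ : |μ| ≤ 1) (hθ : ∀ k, |θ k| ≤ ε) (hκ : ∀ k, |κ k| ≤ ε) (hε : ε ≤ 1 / 2) (h0 : M 0 = 1)
    (hM : ∀ k, M (k + 1) = siteLin μ (θ k) (κ k) * M k * (homLin μ)⁻¹) (k : ℕ) :
    IsUnit (M k).det ∧ ‖M k - 1‖ ≤ 49 ^ k * (4 * ε) ∧ ‖(M k)⁻¹ - 1‖ ≤ 85 ^ k * (8 * ε) := by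
  set S : ℕ → Matrix (Fin 2) (Fin 2) ℝ := fun k => siteLin μ (θ k) (κ k)
  have hL : IsUnit (homLin μ).det := by simp [det_homLin]
  have hS : ∀ k, IsUnit (S k).det := fun k => by
    rw [det_siteLin, isUnit_iff_ne_zero]
    linarith [neg_abs_le (κ k), hκ k]
  have hunit := isUnit_det_of_conj_recursion M S _ h0 hM hS (fun _ => by simp [det_homLin])
  have hMinv : ∀ k, (M (k + 1))⁻¹ = homLin μ * (M k)⁻¹ * (S k)⁻¹ := fun k => by
    rw [hM, Matrix.mul_inv_rev, Matrix.mul_inv_rev, nonsing_inv_nonsing_inv _ hL, mul_assoc]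
  refine ⟨hunit k, ?_, ?_⟩
  -- `49 = 2² · 4 · 3 + 1` and `85 = 2² · 3 · 7 + 1` come from the norm bounds of the two factors.
  · have := norm_conj_sub_one_le_pow M S (fun _ => (homLin μ)⁻¹) h0 hM
      (fun k => norm_siteLin_le hμ (hθ k) (hκ k) hε) (fun _ => norm_homLin_inv_le hμ)
      (fun k => norm_siteLin_mul_homLin_inv_sub_one_le hμ (hθ k) (hκ k)) k
    norm_num at this ⊢
    exact this
  · have := norm_conj_sub_one_le_pow (fun k => (M k)⁻¹) (fun _ => homLin μ) (fun k => (S k)⁻¹)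
      (by simp [h0]) hMinv (fun _ => norm_homLin_le hμ)
      (fun k => norm_siteLin_inv_le hμ (hθ k) (hκ k) hε)
      (fun k => norm_homLin_mul_siteLin_inv_sub_one_le hμ (hθ k) (hκ k) hε) k
    norm_num at this ⊢
    exact this

theorem correction_estimates {n₀ : ℕ} {μ ε : ℝ} {θ κ : ℤ → ℝ}
    {A : ℤ → Matrix (Fin 2) (Fin 2) ℝ} (hμ : |μ| ≤ 1) (hθ : ∀ n, |θ n| ≤ ε)
    (hκ : ∀ n, |κ n| ≤ ε) (hε : ε ≤ 1 / 2) (h0 : A (-n₀ - 1) = 1)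
    (hA : ∀ n, -(n₀ : ℤ) ≤ n → A n = siteLin μ (θ n) (κ n) * A (n - 1) * (homLin μ)⁻¹)
    {n : ℤ} (hlo : -(n₀ : ℤ) - 1 ≤ n) (hhi : n ≤ n₀) :
    IsUnit (A n).det ∧ ‖A n - 1‖ ≤ 8 * 85 ^ (2 * n₀ + 1) * ε ∧
      ‖(A n)⁻¹ - 1‖ ≤ 8 * 85 ^ (2 * n₀ + 1) * ε := by
  obtain ⟨k, rfl, hk⟩ : ∃ k : ℕ, n = -n₀ - 1 + k ∧ k ≤ 2 * n₀ + 1 :=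
    ⟨(n + n₀ + 1).toNat, by omega, by omega⟩
  have hstep : ∀ k : ℕ, A (-n₀ - 1 + ↑(k + 1)) =
      siteLin μ (θ (-n₀ + k)) (κ (-n₀ + k)) * A (-n₀ - 1 + k) * (homLin μ)⁻¹ := fun k => by
    rw [show -(n₀ : ℤ) - 1 + ↑(k + 1) = -n₀ + k by push_cast; ring, hA _ (by omega),
      show -(n₀ : ℤ) + k - 1 = -n₀ - 1 + k by ring]
  obtain ⟨hunit, hnorm, hinv⟩ := site_recursion_estimates (M := fun k => A (-n₀ - 1 + k))
    hμ (fun _ => hθ _) (fun _ => hκ _) hε (by simpa using h0) hstep k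
  have hε0 : 0 ≤ ε := (abs_nonneg _).trans (hθ 0)
  have h85 : (85 : ℝ) ^ k ≤ 85 ^ (2 * n₀ + 1) := pow_le_pow_right₀ (by norm_num) hk
  have h49 : (49 : ℝ) ^ k ≤ 85 ^ k := pow_le_pow_left₀ (by norm_num) (by norm_num) k
  refine ⟨hunit, hnorm.trans ?_, hinv.trans ?_⟩
  · linarith [mul_le_mul_of_nonneg_right (h49.trans h85) hε0,
      mul_nonneg (pow_nonneg (by norm_num : (0 : ℝ) ≤ 85) (2 * n₀ + 1)) hε0]
  · linarith [mul_le_mul_of_nonneg_right h85 hε0]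

/-- Leading-order replacement of the nonautonomous defect maps F_n by
F̂_n = A_n ∘ F ∘ A_{n−1}⁻¹: (i) F̂_n approximates F_n up to Cε‖U‖³,
(ii) the composition of the F̂_n across the defect region equals
A_{n₀} ∘ F^{2n₀+1}, (iii) A_{n₀} is ε-close to the identity. -/
theorem stmt_12 (n₀ : ℕ) :
    ∃ C' > 0, ∀ B : ℝ, ∃ C > 0,
      ∀ (μ : ℝ) (θ κ : ℤ → ℝ) (ε : ℝ),
        |μ| ≤ 1 →
        (∀ n : ℤ, (n₀ : ℤ) < |n| → θ n = 0 ∧ κ n = 0) →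
        (∀ n : ℤ, |κ n| < 1) →
        (∀ n : ℤ, |θ n| ≤ ε) → (∀ n : ℤ, |κ n| ≤ ε) → ε ≤ 1 / 2 →
        let L : Matrix (Fin 2) (Fin 2) ℝ := !![0, 1; -1, 2 - μ]
        let T : ℤ → Matrix (Fin 2) (Fin 2) ℝ :=
          fun n => !![0, 0; θ n + (μ - 2) * κ n, κ n]
        let Ln : ℤ → Matrix (Fin 2) (Fin 2) ℝ := fun n => (1 + T n) * L
        let F : (Fin 2 → ℝ) → Fin 2 → ℝ :=
          fun U => ![U 1, -U 0 + (2 - μ) * U 1 + B * U 1 ^ 3]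
        let Fn : ℤ → (Fin 2 → ℝ) → Fin 2 → ℝ :=
          fun n U => ![U 1, -(1 + κ n) * U 0 + (2 + θ n - μ) * U 1 + B * U 1 ^ 3]
        let A : ℤ → Matrix (Fin 2) (Fin 2) ℝ := fun n =>
          (((List.range (n + n₀ + 1).toNat).map fun j => Ln (n - j)).prod) *
            L⁻¹ ^ (n + n₀ + 1).toNat
        let Fhat : ℤ → (Fin 2 → ℝ) → Fin 2 → ℝ := fun n U =>
          Matrix.mulVec (A n) (F (Matrix.mulVec (A (n - 1))⁻¹ U))
        ((∀ n : ℤ, -(n₀ : ℤ) ≤ n → n ≤ (n₀ : ℤ) → ∀ U : Fin 2 → ℝ,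
            ‖Fhat n U - Fn n U‖ ≤ C * ε * ‖U‖ ^ 3) ∧
          (∀ V : ℕ → Fin 2 → ℝ,
            (∀ j : ℕ, j < 2 * n₀ + 1 → V (j + 1) = Fhat (-(n₀ : ℤ) + j) (V j)) →
            V (2 * n₀ + 1) = Matrix.mulVec (A (n₀ : ℤ)) (F^[2 * n₀ + 1] (V 0))) ∧
          ‖A (n₀ : ℤ) - 1‖ ≤ C' * ε) := by
  set D : ℝ := 8 * 85 ^ (2 * n₀ + 1)
  refine ⟨D, by positivity, fun B => ⟨8 * (|B| + 1) * (1 + 2 * D) ^ 3 * D, by positivity, ?_⟩⟩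
  intro μ θ κ ε hμ _ _ hθ hκ hε L T Ln F Fn A Fhat
  have h0 : A (-n₀ - 1) = 1 := correction_neg_sub_one L Ln n₀
  have hrec : ∀ n, -(n₀ : ℤ) ≤ n → A n = siteLin μ (θ n) (κ n) * A (n - 1) * (homLin μ)⁻¹ :=
    fun n hn => by rw [← one_add_mul_homLin]; exact correction_eq_mul_correction_mul L Ln n₀ hn
  have hA := fun {n} => correction_estimates (n := n) hμ hθ hκ hε h0 hrec
  refine ⟨fun n hlo hhi U => ?_, fun V hV => ?_, (hA (by omega) le_rfl).2.1⟩
  · obtain ⟨hunit, -, hinv⟩ := hA (n := n - 1) (by omega) (by omega)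
    have hcomm : A n * homLin μ = siteLin μ (θ n) (κ n) * A (n - 1) := by
      rw [hrec n hlo, mul_assoc, nonsing_inv_mul _ (by simp [det_homLin]), mul_one]
    simp only [Fhat, F, Fn, homMap_eq, siteMap_eq]
    have hε0 : 0 ≤ ε := (abs_nonneg _).trans (hθ 0)
    have hδ0 : 0 ≤ D * ε := mul_nonneg (by positivity) hε0
    calc _ ≤ 8 * |B| * (1 + 2 * (D * ε)) ^ 3 * (D * ε) * ‖U‖ ^ 3 :=
          norm_conj_add_cubicTerm_sub_le hunit hcomm (hA (by omega) hhi).2.1 hinv U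
      _ ≤ 8 * (|B| + 1) * (1 + 2 * D) ^ 3 * (D * ε) * ‖U‖ ^ 3 := by
          gcongr
          · linarith
          · exact mul_le_of_le_one_right (by positivity) (by linarith)
      _ = 8 * (|B| + 1) * (1 + 2 * D) ^ 3 * D * ε * ‖U‖ ^ 3 := by ring
  · have := eq_mulVec_iterate_of_conj F A (-n₀) (2 * n₀ + 1) h0
      (fun j hj => (hA (by omega) (by omega)).1) V hV _ le_rfl
    rwa [show -(n₀ : ℤ) + ↑(2 * n₀ + 1) - 1 = n₀ by push_cast; ring] at this
end

section
/- Fix n₀ ∈ ℕ and Ω > 0. There exists a constant C > 0, depending only on n₀ and Ω, with the following property. Let μ ∈ ℝ with |μ| ≤ 1, set ω² = Ω² + μ, and let (ε_n), (η_n), (γ_n), (κ_n) be real sequences vanishing for |n| > n₀ with ε̄ := max of the sup norms of the four sequences ≤ 1/2. Define θ_n = Ω²(η_n + η_nγ_n + γ_n) − ω²ε_n + κ_n, T_n = [[0,0],[θ_n + (μ−2)κ_n, κ_n]], L = [[0,1],[−1,2−μ]], L_n = (I+T_n)L, A = L_{n₀} L_{n₀−1} ⋯ L_{−n₀} L^{−(2n₀+1)},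 and ρ_n = Ω²(η_n + γ_n − ε_n). Let M be the 2×2 matrix with entries M₁₁ = Σ_{n=0}^{2n₀} [n(n+1)ρ_{n₀−n} − n κ_{n₀−n}], M₁₂ = Σ_{n=0}^{2n₀} [−n² ρ_{n₀−n} + n κ_{n₀−n}], M₂₁ = Σ_{n=0}^{2n₀} [(n+1)² ρ_{n₀−n} − (n+1) κ_{n₀−n}], M₂₂ = Σ_{n=0}^{2n₀} [−n(n+1) ρ_{n₀−n} + (n+1) κ_{n₀−n}]. Then ‖A − I − M‖ ≤ C (ε̄² + ε̄|μ|). -/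
/-!
Conjugating by powers of `L` telescopes the product: `A = ∏ⱼ (1 + Lʲ Tⱼ L⁻ʲ)`, so
`A - 1 - ∑ⱼ Lʲ Tⱼ L⁻ʲ` is quadratic in the defects. Replacing `L` by its value `L₀` at `μ = 0`
and `Tⱼ` by its part `T⁰ⱼ` linear in the defects costs `O(ε̄² + ε̄ |μ|)` in each term, and
since `L₀ʲ = [[1 - j, j], [-j, 1 + j]]`, the conjugates `L₀ʲ T⁰ⱼ L₀⁻ʲ` are the summands of `M`.
-/

attribute [local instance] Matrix.normedAddCommGroup

theorem list_prod_map_mul_eq_prod_conj_mul_pow {M : Type*} [Monoid M] {L L' : M}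
    (hL : L' * L = 1) (g : ℕ → M) (n : ℕ) :
    ((List.range n).map fun j => g j * L).prod
      = ((List.range n).map fun j => L ^ j * g j * L' ^ j).prod * L ^ n := by
  induction n with
  | zero => simp
  | succ n ih =>
    simp only [List.prod_range_succ, ih, pow_succ, mul_assoc]
    rw [← mul_assoc (L' ^ n), pow_mul_pow_eq_one n hL, one_mul]

section NormedRing

variable {R : Type*} [SeminormedRing R]

theorem norm_mul_mul_sub_mul_mul_le (a b c a' b' c' : R) :
    ‖a * b * c - a' * b' * c'‖
      ≤ ‖a - a'‖ * ‖b‖ * ‖c‖ + ‖a'‖ * ‖b - b'‖ * ‖c‖ + ‖a'‖ * ‖b'‖ * ‖c - c'‖ := by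
  have h : a * b * c - a' * b' * c'
      = (a - a') * b * c + a' * (b - b') * c + a' * b' * (c - c') := by noncomm_ring
  rw [h]
  refine norm_add₃_le.trans (add_le_add_three ?_ ?_ ?_) <;> exact norm_mul₃_le

variable [NormOneClass R]

theorem norm_pow_sub_pow_le {a b : R} {c : ℝ} (ha : ‖a‖ ≤ c) (hb : ‖b‖ ≤ c) (n : ℕ) :
    ‖a ^ n - b ^ n‖ ≤ n * c ^ (n - 1) * ‖a - b‖ := by
  have hc : 0 ≤ c := (norm_nonneg a).trans ha
  induction n with
  | zero => simp
  | succ n ih =>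
    have h : a ^ (n + 1) - b ^ (n + 1) = a ^ n * (a - b) + (a ^ n - b ^ n) * b := by
      simp only [pow_succ]; noncomm_ring
    have hpow : ‖a ^ n‖ ≤ c ^ n := (norm_pow_le a n).trans (pow_le_pow_left₀ (norm_nonneg a) ha n)
    have hstep : (n : ℝ) * c ^ (n - 1) * c = n * c ^ n := by
      cases n with
      | zero => simp
      | succ n => simp [pow_succ, mul_assoc]
    calc ‖a ^ (n + 1) - b ^ (n + 1)‖
        ≤ ‖a ^ n‖ * ‖a - b‖ + ‖a ^ n - b ^ n‖ * ‖b‖ := by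
          rw [h]; exact (norm_add_le _ _).trans (add_le_add (norm_mul_le _ _) (norm_mul_le _ _))
      _ ≤ c ^ n * ‖a - b‖ + n * c ^ (n - 1) * ‖a - b‖ * c := by gcongr
      _ = (n + 1 : ℕ) * c ^ (n + 1 - 1) * ‖a - b‖ := by
          rw [mul_right_comm _ ‖a - b‖, hstep, Nat.add_sub_cancel]; push_cast; ring

theorem norm_list_prod_one_add_sub_one_le {x : ℕ → R} {b : ℝ} {n : ℕ}
    (hx : ∀ j < n, ‖x j‖ ≤ b) :
    ‖((List.range n).map fun j => 1 + x j).prod - 1‖ ≤ n * b * (1 + b) ^ n := by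
  induction n with
  | zero => simp
  | succ n ih =>
    have hb : 0 ≤ b := (norm_nonneg _).trans (hx 0 n.succ_pos)
    have hxn : ‖1 + x n‖ ≤ 1 + b :=
      (norm_add_le _ _).trans (by rw [norm_one]; linarith [hx n n.lt_succ_self])
    have h := ih fun j hj => hx j (hj.trans n.lt_succ_self)
    set P := ((List.range n).map fun j => 1 + x j).prod
    have hsplit : P * (1 + x n) - 1 = (P - 1) * (1 + x n) + x n := by noncomm_ring
    have hpow : (1 : ℝ) ≤ (1 + b) ^ n * (1 + b) := by
      rw [← pow_succ]; exact one_le_pow₀ (by linarith)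
    rw [List.prod_range_succ, hsplit]
    calc ‖(P - 1) * (1 + x n) + x n‖ ≤ ‖P - 1‖ * ‖1 + x n‖ + ‖x n‖ :=
          (norm_add_le _ _).trans (add_le_add (norm_mul_le _ _) le_rfl)
      _ ≤ n * b * (1 + b) ^ n * (1 + b) + b := by gcongr; exact hx n n.lt_succ_self
      _ ≤ (n + 1 : ℕ) * b * (1 + b) ^ (n + 1) := by
          push_cast; rw [pow_succ]; nlinarith [mul_le_mul_of_nonneg_left hpow hb]

theorem norm_list_prod_one_add_sub_one_sub_sum_le {x : ℕ → R} {b : ℝ} {n : ℕ}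
    (hx : ∀ j < n, ‖x j‖ ≤ b) :
    ‖((List.range n).map fun j => 1 + x j).prod - 1 - ∑ j ∈ Finset.range n, x j‖
      ≤ (n * b) ^ 2 * (1 + b) ^ n := by
  induction n with
  | zero => simp
  | succ n ih =>
    have hb : 0 ≤ b := (norm_nonneg _).trans (hx 0 n.succ_pos)
    have hx' : ∀ j < n, ‖x j‖ ≤ b := fun j hj => hx j (hj.trans n.lt_succ_self)
    set P := ((List.range n).map fun j => 1 + x j).prod
    set S := ∑ j ∈ Finset.range n, x j
    have hsplit : P * (1 + x n) - 1 - (S + x n) = (P - 1 - S) + (P - 1) * x n := by noncomm_ring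
    have hpow : (1 + b) ^ n ≤ (1 + b) ^ (n + 1) := pow_le_pow_right₀ (by linarith) n.le_succ
    rw [List.prod_range_succ, Finset.sum_range_succ, hsplit]
    calc ‖(P - 1 - S) + (P - 1) * x n‖ ≤ ‖P - 1 - S‖ + ‖P - 1‖ * ‖x n‖ :=
          (norm_add_le _ _).trans (add_le_add le_rfl (norm_mul_le _ _))
      _ ≤ (n * b) ^ 2 * (1 + b) ^ n + n * b * (1 + b) ^ n * b := by
          gcongr
          · exact ih hx'
          · exact norm_list_prod_one_add_sub_one_le hx'
          · exact hx n n.lt_succ_self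
      _ ≤ ((n + 1 : ℕ) * b) ^ 2 * (1 + b) ^ n := by
          push_cast
          have : 0 ≤ ((n : ℝ) + 1) * b ^ 2 * (1 + b) ^ n := by positivity
          nlinarith
      _ ≤ ((n + 1 : ℕ) * b) ^ 2 * (1 + b) ^ (n + 1) := by gcongr

theorem norm_pow_mul_mul_pow_sub_le {a a' b b' x x' : R} {c δ β γ : ℝ} (hc : 1 ≤ c)
    (ha : ‖a‖ ≤ c) (ha' : ‖a'‖ ≤ c) (hb : ‖b‖ ≤ c) (hb' : ‖b'‖ ≤ c)
    (haa' : ‖a - a'‖ ≤ δ) (hbb' : ‖b - b'‖ ≤ δ) (hx : ‖x‖ ≤ β) (hx' : ‖x'‖ ≤ β)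
    (hxx' : ‖x - x'‖ ≤ γ) (n : ℕ) :
    ‖a ^ n * x * b ^ n - a' ^ n * x' * b' ^ n‖ ≤ c ^ (2 * n) * (2 * n * β * δ + γ) := by
  have hδ : 0 ≤ δ := (norm_nonneg _).trans haa'
  have hpow {y : R} (hy : ‖y‖ ≤ c) : ‖y ^ n‖ ≤ c ^ n :=
    (norm_pow_le y n).trans (pow_le_pow_left₀ (norm_nonneg y) hy n)
  have hsub {y y' : R} (hy : ‖y‖ ≤ c) (hy' : ‖y'‖ ≤ c) (hyy' : ‖y - y'‖ ≤ δ) :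
      ‖y ^ n - y' ^ n‖ ≤ n * c ^ n * δ := by
    refine (norm_pow_sub_pow_le hy hy' n).trans ?_
    have : c ^ (n - 1) ≤ c ^ n := pow_le_pow_right₀ hc (n.sub_le 1)
    gcongr
  have hβ : 0 ≤ β := (norm_nonneg _).trans hx
  have hγ : 0 ≤ γ := (norm_nonneg _).trans hxx'
  refine (norm_mul_mul_sub_mul_mul_le _ _ _ _ _ _).trans ?_
  calc _ ≤ n * c ^ n * δ * β * c ^ n + c ^ n * γ * c ^ n + c ^ n * β * (n * c ^ n * δ) := by
        gcongr <;> first | exact hpow ‹_› | exact hsub ‹_› ‹_› ‹_›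
    _ = c ^ (2 * n) * (2 * n * β * δ + γ) := by ring

theorem norm_list_prod_mul_mul_pow_sub_one_sub_sum_le {L L' L₀ L₀' : R} (hL : L * L' = 1)
    (hL' : L' * L = 1) {c δ β γ : ℝ} (hc : 1 ≤ c) (hLc : ‖L‖ ≤ c) (hL'c : ‖L'‖ ≤ c)
    (hL₀c : ‖L₀‖ ≤ c) (hL₀'c : ‖L₀'‖ ≤ c) (hLL₀ : ‖L - L₀‖ ≤ δ) (hL'L₀' : ‖L' - L₀'‖ ≤ δ)
    {T T₀ : ℕ → R} (hT : ∀ j, ‖T j‖ ≤ β) (hT₀ : ∀ j, ‖T₀ j‖ ≤ β)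
    (hTT₀ : ∀ j, ‖T j - T₀ j‖ ≤ γ) (N : ℕ) :
    ‖((List.range N).map fun j => (1 + T j) * L).prod * L' ^ N - 1
        - ∑ j ∈ Finset.range N, L₀ ^ j * T₀ j * L₀' ^ j‖
      ≤ (N * (c ^ (2 * N) * β)) ^ 2 * (1 + c ^ (2 * N) * β) ^ N
        + N * (c ^ (2 * N) * (2 * N * β * δ + γ)) := by
  set B : ℕ → R := fun j => L ^ j * T j * L' ^ j
  have hprod : ((List.range N).map fun j => (1 + T j) * L).prod * L' ^ N
      = ((List.range N).map fun j => 1 + B j).prod := by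
    rw [list_prod_map_mul_eq_prod_conj_mul_pow hL', mul_assoc, pow_mul_pow_eq_one N hL, mul_one]
    congr 1
    refine List.map_congr_left fun j _ => ?_
    rw [mul_add, mul_one, add_mul, pow_mul_pow_eq_one j hL]
  have hβ : 0 ≤ β := (norm_nonneg _).trans (hT₀ 0)
  have hδ : 0 ≤ δ := (norm_nonneg _).trans hLL₀
  have hγ : 0 ≤ γ := (norm_nonneg _).trans (hTT₀ 0)
  have hB : ∀ j < N, ‖B j‖ ≤ c ^ (2 * N) * β := fun j hj => by
    refine norm_mul₃_le.trans ?_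
    calc _ ≤ c ^ j * β * c ^ j := by
          gcongr
          · exact (norm_pow_le L j).trans (pow_le_pow_left₀ (norm_nonneg L) hLc j)
          · exact hT j
          · exact (norm_pow_le L' j).trans (pow_le_pow_left₀ (norm_nonneg L') hL'c j)
      _ = c ^ (2 * j) * β := by ring
      _ ≤ c ^ (2 * N) * β := by gcongr
  have hBB₀ : ∀ j ∈ Finset.range N,
      ‖B j - L₀ ^ j * T₀ j * L₀' ^ j‖ ≤ c ^ (2 * N) * (2 * N * β * δ + γ) := fun j hj => by
    have hj := Finset.mem_range.1 hj
    refine (norm_pow_mul_mul_pow_sub_le hc hLc hL₀c hL'c hL₀'c hLL₀ hL'L₀' (hT j) (hT₀ j)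
      (hTT₀ j) j).trans ?_
    gcongr
  have hsplit : ((List.range N).map fun j => 1 + B j).prod - 1
        - ∑ j ∈ Finset.range N, L₀ ^ j * T₀ j * L₀' ^ j
      = (((List.range N).map fun j => 1 + B j).prod - 1 - ∑ j ∈ Finset.range N, B j)
        + ∑ j ∈ Finset.range N, (B j - L₀ ^ j * T₀ j * L₀' ^ j) := by
    rw [Finset.sum_sub_distrib]; abel
  rw [hprod, hsplit]
  refine (norm_add_le _ _).trans (add_le_add (norm_list_prod_one_add_sub_one_sub_sum_le hB) ?_)
  refine (norm_sum_le _ _).trans ((Finset.sum_le_card_nsmul _ _ _ hBB₀).trans_eq ?_)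
  rw [Finset.card_range, nsmul_eq_mul]

end NormedRing

/- The entrywise norm of the statement is not submultiplicative: the estimates are made in the
`L∞` operator norm, which bounds every entry. -/
section LinftyOp

open scoped Matrix.Norms.Operator

theorem Matrix.linfty_opNorm_le_iff {m n α : Type*} [Fintype m] [Fintype n]
    [SeminormedAddCommGroup α] {A : Matrix m n α} {r : ℝ} (hr : 0 ≤ r) :
    ‖A‖ ≤ r ↔ ∀ i, ∑ j, ‖A i j‖ ≤ r := by
  lift r to NNReal using hr
  simp only [linfty_opNorm_def, NNReal.coe_le_coe, Finset.sup_le_iff, Finset.mem_univ,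
    true_implies]
  refine forall_congr' fun i => ?_
  rw [← NNReal.coe_le_coe, NNReal.coe_sum]
  simp only [coe_nnnorm]

theorem Matrix.norm_entry_le_linfty_opNorm {m n α : Type*} [Fintype m] [Fintype n]
    [SeminormedAddCommGroup α] (A : Matrix m n α) (i : m) (j : n) : ‖A i j‖ ≤ ‖A‖ :=
  (Finset.single_le_sum (fun j _ => norm_nonneg (A i j)) (Finset.mem_univ j)).trans
    ((Matrix.linfty_opNorm_le_iff (norm_nonneg A)).1 le_rfl i)

theorem Matrix.linfty_opNorm_fin_two_le {a b c d r : ℝ} (h₀ : |a| + |b| ≤ r)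
    (h₁ : |c| + |d| ≤ r) : ‖!![a, b; c, d]‖ ≤ r := by
  refine (Matrix.linfty_opNorm_le_iff ((by positivity : (0:ℝ) ≤ |c| + |d|).trans h₁)).2 ?_
  intro i
  fin_cases i <;> simpa [Fin.sum_univ_two]

def transferMatrix (μ : ℝ) : Matrix (Fin 2) (Fin 2) ℝ := !![0, 1; -1, 2 - μ]

theorem det_transferMatrix (μ : ℝ) : (transferMatrix μ).det = 1 := by
  simp [transferMatrix, Matrix.det_fin_two]

theorem transferMatrix_inv (μ : ℝ) : (transferMatrix μ)⁻¹ = !![2 - μ, -1; 1, 0] := by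
  rw [Matrix.inv_def, det_transferMatrix, Matrix.adjugate_fin_two]
  simp [transferMatrix]

theorem transferMatrix_zero_pow (j : ℕ) :
    transferMatrix 0 ^ j = !![1 - (j : ℝ), j; -j, 1 + j] := by
  induction j with
  | zero => simp [Matrix.one_fin_two]
  | succ j ih =>
    rw [pow_succ, ih, transferMatrix, Matrix.mul_fin_two]
    push_cast
    ext i k; fin_cases i <;> fin_cases k <;> simp <;> ring

theorem transferMatrix_zero_inv_pow (j : ℕ) :
    (transferMatrix 0)⁻¹ ^ j = !![1 + (j : ℝ), -j; j, 1 - j] := by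
  induction j with
  | zero => simp [Matrix.one_fin_two]
  | succ j ih =>
    rw [pow_succ, ih, transferMatrix_inv, Matrix.mul_fin_two]
    push_cast
    ext i k; fin_cases i <;> fin_cases k <;> simp <;> ring

theorem transferMatrix_zero_pow_mul_mul_inv_pow (j : ℕ) (a b : ℝ) :
    transferMatrix 0 ^ j * !![0, 0; a - b, b] * (transferMatrix 0)⁻¹ ^ j
      = !![j * (j + 1) * a - j * b, -j ^ 2 * a + j * b;
           (j + 1) ^ 2 * a - (j + 1) * b, -j * (j + 1) * a + (j + 1) * b] := by
  rw [transferMatrix_zero_pow, transferMatrix_zero_inv_pow, Matrix.mul_fin_two,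
    Matrix.mul_fin_two]
  ext i k; fin_cases i <;> fin_cases k <;> simp <;> ring

variable {μ : ℝ}

theorem norm_transferMatrix_le (hμ : |μ| ≤ 1) : ‖transferMatrix μ‖ ≤ 4 := by
  refine Matrix.linfty_opNorm_fin_two_le (by norm_num) ?_
  have := abs_sub (2 : ℝ) μ
  norm_num at this ⊢; linarith

theorem norm_transferMatrix_inv_le (hμ : |μ| ≤ 1) : ‖(transferMatrix μ)⁻¹‖ ≤ 4 := by
  rw [transferMatrix_inv]
  refine Matrix.linfty_opNorm_fin_two_le ?_ (by norm_num)
  have := abs_sub (2 : ℝ) μ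
  norm_num at this ⊢; linarith

theorem norm_transferMatrix_sub_le : ‖transferMatrix μ - transferMatrix 0‖ ≤ |μ| := by
  rw [Matrix.eta_fin_two (transferMatrix μ - _)]
  exact Matrix.linfty_opNorm_fin_two_le (by simp [transferMatrix]) (by simp [transferMatrix])

theorem norm_transferMatrix_inv_sub_le :
    ‖(transferMatrix μ)⁻¹ - (transferMatrix 0)⁻¹‖ ≤ |μ| := by
  rw [Matrix.eta_fin_two ((transferMatrix μ)⁻¹ - _)]
  exact Matrix.linfty_opNorm_fin_two_le (by simp [transferMatrix_inv])
    (by simp [transferMatrix_inv])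

-- `defectMatrix` is the paper's `T_n`; `linearDefectMatrix` is its first-order part at `μ = 0`.
def defectMatrix (Ω μ e h g k : ℝ) : Matrix (Fin 2) (Fin 2) ℝ :=
  !![0, 0; Ω ^ 2 * (h + h * g + g) - (Ω ^ 2 + μ) * e + k + (μ - 2) * k, k]

def linearDefectMatrix (Ω e h g k : ℝ) : Matrix (Fin 2) (Fin 2) ℝ :=
  !![0, 0; Ω ^ 2 * (h + g - e) - k, k]

section DefectBounds

variable {Ω e h g k ε : ℝ}

theorem norm_linearDefectMatrix_le (he : |e| ≤ ε) (hh : |h| ≤ ε) (hg : |g| ≤ ε)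
    (hk : |k| ≤ ε) :
    ‖linearDefectMatrix Ω e h g k‖ ≤ (3 * Ω ^ 2 + 2) * ε := by
  have hε : 0 ≤ ε := (abs_nonneg e).trans he
  refine Matrix.linfty_opNorm_fin_two_le (by simp; positivity) ?_
  have hsum : |h + g - e| ≤ 3 * ε := by
    have := abs_sub (h + g) e; have := abs_add_le h g; linarith
  calc |Ω ^ 2 * (h + g - e) - k| + |k| ≤ Ω ^ 2 * |h + g - e| + |k| + |k| := by
        grw [abs_sub, abs_mul, abs_sq]
    _ ≤ Ω ^ 2 * (3 * ε) + ε + ε := by gcongr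
    _ = (3 * Ω ^ 2 + 2) * ε := by ring

theorem norm_defectMatrix_sub_linearDefectMatrix_le (μ : ℝ) (he : |e| ≤ ε) (hh : |h| ≤ ε)
    (hg : |g| ≤ ε) (hk : |k| ≤ ε) :
    ‖defectMatrix Ω μ e h g k - linearDefectMatrix Ω e h g k‖
      ≤ (Ω ^ 2 + 2) * (ε ^ 2 + ε * |μ|) := by
  have hε : 0 ≤ ε := (abs_nonneg e).trans he
  have hdiff : defectMatrix Ω μ e h g k - linearDefectMatrix Ω e h g k
      = !![0, 0; Ω ^ 2 * (h * g) + μ * (k - e), 0] := by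
    ext i j; fin_cases i <;> fin_cases j <;> simp [defectMatrix, linearDefectMatrix]; ring
  rw [hdiff]
  refine Matrix.linfty_opNorm_fin_two_le (by simp; positivity) ?_
  have hhg : |h * g| ≤ ε ^ 2 := by rw [abs_mul, sq]; gcongr
  have hke : |k - e| ≤ 2 * ε := by have := abs_sub k e; linarith
  calc |Ω ^ 2 * (h * g) + μ * (k - e)| + |(0 : ℝ)| ≤ Ω ^ 2 * |h * g| + |μ| * |k - e| := by
        grw [abs_zero, add_zero, abs_add_le, abs_mul, abs_mul μ, abs_sq]
    _ ≤ Ω ^ 2 * ε ^ 2 + |μ| * (2 * ε) := by gcongr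
    _ ≤ (Ω ^ 2 + 2) * (ε ^ 2 + ε * |μ|) := by
        nlinarith [sq_nonneg Ω, mul_nonneg hε (abs_nonneg μ), sq_nonneg ε]

end DefectBounds

-- `4` bounds the transfer matrices and `(5 * Ω ^ 2 + 6) * ε` the defect matrices.
def expansionConstant (N : ℕ) (Ω : ℝ) : ℝ :=
  (N * (4 ^ (2 * N) * (5 * Ω ^ 2 + 6))) ^ 2 * (1 + 4 ^ (2 * N) * (5 * Ω ^ 2 + 6)) ^ N
    + N * (4 ^ (2 * N) * (2 * N * (5 * Ω ^ 2 + 6) + (Ω ^ 2 + 2)))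

theorem norm_list_prod_defect_transfer_sub_one_sub_sum_le {Ω μ ε : ℝ} (hμ : |μ| ≤ 1)
    (hε : ε ≤ 1) {e h g k : ℕ → ℝ}
    (hbd : ∀ j, |e j| ≤ ε ∧ |h j| ≤ ε ∧ |g j| ≤ ε ∧ |k j| ≤ ε) (N : ℕ) :
    ‖((List.range N).map fun j =>
          (1 + defectMatrix Ω μ (e j) (h j) (g j) (k j)) * transferMatrix μ).prod
        * (transferMatrix μ)⁻¹ ^ N - 1
        - ∑ j ∈ Finset.range N,
          transferMatrix 0 ^ j * linearDefectMatrix Ω (e j) (h j) (g j) (k j)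
            * (transferMatrix 0)⁻¹ ^ j‖
      ≤ expansionConstant N Ω * (ε ^ 2 + ε * |μ|) := by
  have hε₀ : 0 ≤ ε := (abs_nonneg _).trans (hbd 0).1
  have hεμ : 0 ≤ ε * |μ| := by positivity
  set K := 5 * Ω ^ 2 + 6
  have hT₀ (j : ℕ) : ‖linearDefectMatrix Ω (e j) (h j) (g j) (k j)‖ ≤ K * ε := by
    obtain ⟨he, hh, hg, hk⟩ := hbd j
    refine (norm_linearDefectMatrix_le he hh hg hk).trans ?_
    nlinarith [sq_nonneg Ω]
  have hTT₀ (j : ℕ) : ‖defectMatrix Ω μ (e j) (h j) (g j) (k j)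
      - linearDefectMatrix Ω (e j) (h j) (g j) (k j)‖ ≤ (Ω ^ 2 + 2) * (ε ^ 2 + ε * |μ|) := by
    obtain ⟨he, hh, hg, hk⟩ := hbd j
    exact norm_defectMatrix_sub_linearDefectMatrix_le μ he hh hg hk
  have hT (j : ℕ) : ‖defectMatrix Ω μ (e j) (h j) (g j) (k j)‖ ≤ K * ε := by
    obtain ⟨he, hh, hg, hk⟩ := hbd j
    have hsmall : ε ^ 2 + ε * |μ| ≤ 2 * ε := by nlinarith
    calc _ ≤ ‖defectMatrix Ω μ (e j) (h j) (g j) (k j)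
            - linearDefectMatrix Ω (e j) (h j) (g j) (k j)‖
          + ‖linearDefectMatrix Ω (e j) (h j) (g j) (k j)‖ := norm_le_norm_sub_add _ _
      _ ≤ (Ω ^ 2 + 2) * (2 * ε) + (3 * Ω ^ 2 + 2) * ε := by
          grw [hTT₀ j, hsmall, norm_linearDefectMatrix_le he hh hg hk]
      _ = K * ε := by ring
  have hdet : IsUnit (transferMatrix μ).det := by simp [det_transferMatrix]
  have habs₀ : |(0 : ℝ)| ≤ 1 := by simp
  refine (norm_list_prod_mul_mul_pow_sub_one_sub_sum_le (Matrix.mul_nonsing_inv _ hdet)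
    (Matrix.nonsing_inv_mul _ hdet) (by norm_num) (norm_transferMatrix_le hμ)
    (norm_transferMatrix_inv_le hμ) (norm_transferMatrix_le habs₀)
    (norm_transferMatrix_inv_le habs₀) norm_transferMatrix_sub_le norm_transferMatrix_inv_sub_le
    hT hT₀ hTT₀ N).trans ?_
  set κ : ℝ := 4 ^ (2 * N)
  have hK : K * ε ≤ K := mul_le_of_le_one_right (by positivity) hε
  calc _ = (N * κ * K) ^ 2 * (1 + κ * (K * ε)) ^ N * ε ^ 2
          + N * κ * (2 * N * K * (ε * |μ|) + (Ω ^ 2 + 2) * (ε ^ 2 + ε * |μ|)) := by ring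
    _ ≤ (N * κ * K) ^ 2 * (1 + κ * K) ^ N * (ε ^ 2 + ε * |μ|)
          + N * κ * (2 * N * K * (ε ^ 2 + ε * |μ|) + (Ω ^ 2 + 2) * (ε ^ 2 + ε * |μ|)) := by
        gcongr <;> linarith [sq_nonneg ε]
    _ = expansionConstant N Ω * (ε ^ 2 + ε * |μ|) := by unfold expansionConstant; ring

end LinftyOp

theorem stmt_14_general (n₀ : ℕ) (Ω : ℝ) :
    ∃ C > 0, ∀ (μ : ℝ) (em eta gam kap : ℤ → ℝ) (εbar : ℝ),
      |μ| ≤ 1 →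
      (∀ n : ℤ, (n₀ : ℤ) < |n| → em n = 0 ∧ eta n = 0 ∧ gam n = 0 ∧ kap n = 0) →
      (∀ n : ℤ, |em n| ≤ εbar ∧ |eta n| ≤ εbar ∧ |gam n| ≤ εbar ∧ |kap n| ≤ εbar) →
      εbar ≤ 1 / 2 →
      let θ : ℤ → ℝ := fun n =>
        Ω ^ 2 * (eta n + eta n * gam n + gam n) - (Ω ^ 2 + μ) * em n + kap n
      let T : ℤ → Matrix (Fin 2) (Fin 2) ℝ :=
        fun n => !![0, 0; θ n + (μ - 2) * kap n, kap n]
      let L : Matrix (Fin 2) (Fin 2) ℝ := !![0, 1; -1, 2 - μ]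
      let A : Matrix (Fin 2) (Fin 2) ℝ :=
        (((List.range (2 * n₀ + 1)).map fun j => (1 + T ((n₀ : ℤ) - j)) * L).prod) *
          L⁻¹ ^ (2 * n₀ + 1)
      let ρ : ℤ → ℝ := fun n => Ω ^ 2 * (eta n + gam n - em n)
      let M : Matrix (Fin 2) (Fin 2) ℝ :=
        !![∑ n ∈ Finset.range (2 * n₀ + 1),
             ((n : ℝ) * ((n : ℝ) + 1) * ρ ((n₀ : ℤ) - n) - (n : ℝ) * kap ((n₀ : ℤ) - n)),
           ∑ n ∈ Finset.range (2 * n₀ + 1),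
             (-(n : ℝ) ^ 2 * ρ ((n₀ : ℤ) - n) + (n : ℝ) * kap ((n₀ : ℤ) - n));
           ∑ n ∈ Finset.range (2 * n₀ + 1),
             (((n : ℝ) + 1) ^ 2 * ρ ((n₀ : ℤ) - n) - ((n : ℝ) + 1) * kap ((n₀ : ℤ) - n)),
           ∑ n ∈ Finset.range (2 * n₀ + 1),
             (-(n : ℝ) * ((n : ℝ) + 1) * ρ ((n₀ : ℤ) - n) + ((n : ℝ) + 1) * kap ((n₀ : ℤ) - n))]
      ‖A - 1 - M‖ ≤ C * (εbar ^ 2 + εbar * |μ|) := by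
  refine ⟨expansionConstant (2 * n₀ + 1) Ω, by unfold expansionConstant; positivity, ?_⟩
  intro μ em eta gam kap εbar hμ _ hbd hε θ T L A ρ M
  have hM : M = ∑ j ∈ Finset.range (2 * n₀ + 1), transferMatrix 0 ^ j
      * linearDefectMatrix Ω (em (n₀ - j)) (eta (n₀ - j)) (gam (n₀ - j)) (kap (n₀ - j))
      * (transferMatrix 0)⁻¹ ^ j := by
    simp only [linearDefectMatrix, transferMatrix_zero_pow_mul_mul_inv_pow]
    ext i k; fin_cases i <;> fin_cases k <;> simp [M, ρ, Matrix.sum_apply]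
  -- in the statement `j` ranges over `List.range` coerced to a list of integers
  have hA : A = ((List.range (2 * n₀ + 1)).map fun j : ℕ => (1 + T (n₀ - j)) * L).prod
      * L⁻¹ ^ (2 * n₀ + 1) := by
    simp only [A, bind_pure_comp, List.map_eq_map, List.map_map, Function.comp_def]
  have hε₀ : 0 ≤ εbar := (abs_nonneg _).trans (hbd 0).1
  rw [hA, hM]
  refine (Matrix.norm_le_iff (by unfold expansionConstant; positivity)).2 fun i k => ?_
  exact (Matrix.norm_entry_le_linfty_opNorm _ i k).trans
    (norm_list_prod_defect_transfer_sub_one_sub_sum_le hμ (by linarith) (fun j => hbd (n₀ - j)) _)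

/-- Leading-order expansion A = I + M + O(ε̄² + ε̄|μ|) of the near-identity linear
transformation governing breather bifurcations in a Klein-Gordon chain with
finitely many small defects, in terms of algebraically-weighted averages of
the defect sequences. -/
theorem stmt_14 (n₀ : ℕ) (Ω : ℝ) (hΩ : 0 < Ω) :
    ∃ C > 0, ∀ (μ : ℝ) (em eta gam kap : ℤ → ℝ) (εbar : ℝ),
      |μ| ≤ 1 →
      (∀ n : ℤ, (n₀ : ℤ) < |n| → em n = 0 ∧ eta n = 0 ∧ gam n = 0 ∧ kap n = 0) →
      (∀ n : ℤ, |em n| ≤ εbar ∧ |eta n| ≤ εbar ∧ |gam n| ≤ εbar ∧ |kap n| ≤ εbar) →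
      εbar ≤ 1 / 2 →
      let θ : ℤ → ℝ := fun n =>
        Ω ^ 2 * (eta n + eta n * gam n + gam n) - (Ω ^ 2 + μ) * em n + kap n
      let T : ℤ → Matrix (Fin 2) (Fin 2) ℝ :=
        fun n => !![0, 0; θ n + (μ - 2) * kap n, kap n]
      let L : Matrix (Fin 2) (Fin 2) ℝ := !![0, 1; -1, 2 - μ]
      let A : Matrix (Fin 2) (Fin 2) ℝ :=
        (((List.range (2 * n₀ + 1)).map fun j => (1 + T ((n₀ : ℤ) - j)) * L).prod) *
          L⁻¹ ^ (2 * n₀ + 1)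
      let ρ : ℤ → ℝ := fun n => Ω ^ 2 * (eta n + gam n - em n)
      let M : Matrix (Fin 2) (Fin 2) ℝ :=
        !![∑ n ∈ Finset.range (2 * n₀ + 1),
             ((n : ℝ) * ((n : ℝ) + 1) * ρ ((n₀ : ℤ) - n) - (n : ℝ) * kap ((n₀ : ℤ) - n)),
           ∑ n ∈ Finset.range (2 * n₀ + 1),
             (-(n : ℝ) ^ 2 * ρ ((n₀ : ℤ) - n) + (n : ℝ) * kap ((n₀ : ℤ) - n));
           ∑ n ∈ Finset.range (2 * n₀ + 1),
             (((n : ℝ) + 1) ^ 2 * ρ ((n₀ : ℤ) - n) - ((n : ℝ) + 1) * kap ((n₀ : ℤ) - n)),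
           ∑ n ∈ Finset.range (2 * n₀ + 1),
             (-(n : ℝ) * ((n : ℝ) + 1) * ρ ((n₀ : ℤ) - n) + ((n : ℝ) + 1) * kap ((n₀ : ℤ) - n))]
      ‖A - 1 - M‖ ≤ C * (εbar ^ 2 + εbar * |μ|) :=
  stmt_14_general n₀ Ω
end
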